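/- arXiv:1401.3309 — 5 statements merged into one kernel-verified Lean document; each statement's English description precedes it below -/
import Mathlib

section
/- Two partial orientations O and O' of a finite connected simple graph G are equivalent in the generalized cycle reversal system (i.e., one can be obtained from the other by a finite sequence of edge pivots and cycle reversals) if and only if their associated divisors are equal: D_O = D_{O'}. -/
/-- A partial orientation of a simple graph `G`: each edge of some subset of the
edges of `G` is given a direction; `dir u v = true` means the edge `{u,v}` is
oriented from `u` towards `v`. -/
structure PartialOrientation {V : Type*} (G : SimpleGraph V) where
  dir : V → V → Bool
  adj_of_dir : ∀ u v, dir u v = true → G.Adj u v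
  not_both : ∀ u v, dir u v = true → dir v u = false

namespace PartialOrientation

variable {V : Type*} {G : SimpleGraph V}

/-- The indegree of a vertex in a partial orientation. -/
def indeg [Fintype V] (O : PartialOrientation G) (v : V) : ℕ :=
  (Finset.univ.filter (fun u => O.dir u v = true)).card

/-- The divisor associated to a partial orientation: `D_O(v) = indeg(v) - 1`. -/
def div [Fintype V] (O : PartialOrientation G) (v : V) : ℤ :=
  (O.indeg v : ℤ) - 1

/-- A partial orientation is acyclic if it has no directed cycle (equivalently,
no vertex reaches itself by a nonempty directed walk). -/
def Acyclic (O : PartialOrientation G) : Prop :=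
  ∀ v, ¬ Relation.TransGen (fun a b => O.dir a b = true) v v

/-- A partial orientation is sourceless if every vertex has an incoming oriented edge. -/
def Sourceless (O : PartialOrientation G) : Prop :=
  ∀ v, ∃ u, O.dir u v = true

/-- A partial orientation is `q`-connected if every vertex is reachable from `q`
by a (possibly empty) directed path. -/
def QConnected (O : PartialOrientation G) (q : V) : Prop :=
  ∀ v, Relation.ReflTransGen (fun a b => O.dir a b = true) q v

/-- A partial orientation is full if every edge of `G` is oriented. -/
def IsFull (O : PartialOrientation G) : Prop :=
  ∀ u v, G.Adj u v → (O.dir u v = true ∨ O.dir v u = true)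

/-- An edge pivot at a vertex `v`: an edge oriented towards `v` becomes unoriented
and a previously unoriented edge incident to `v` becomes oriented towards `v`. -/
def EdgePivot (O O' : PartialOrientation G) : Prop :=
  ∃ v u w, O.dir u v = true ∧ G.Adj w v ∧ O.dir w v = false ∧ O.dir v w = false ∧
    ∀ a b, (O'.dir a b = true ↔
      ((a = w ∧ b = v) ∨ (O.dir a b = true ∧ ¬(a = u ∧ b = v))))

/-- A cycle reversal: all edges of a consistently oriented (directed) cycle are reversed. -/
def CycleReversal (O O' : PartialOrientation G) : Prop :=
  ∃ (n : ℕ) (σ : Fin (n + 1) → V), Function.Injective σ ∧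
    (∀ i : Fin (n + 1), O.dir (σ i) (σ (i + 1)) = true) ∧
    ∀ a b, (O'.dir a b = true ↔
      ((∃ i : Fin (n + 1), a = σ (i + 1) ∧ b = σ i) ∨
        (O.dir a b = true ∧ ¬ ∃ i : Fin (n + 1), a = σ i ∧ b = σ (i + 1))))

/-- A directed path reversal: all edges of a directed path are reversed. -/
def PathReversal (O O' : PartialOrientation G) : Prop :=
  ∃ (n : ℕ) (σ : Fin (n + 1) → V), Function.Injective σ ∧
    (∀ i : Fin n, O.dir (σ i.castSucc) (σ i.succ) = true) ∧
    ∀ a b, (O'.dir a b = true ↔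
      ((∃ i : Fin n, a = σ i.succ ∧ b = σ i.castSucc) ∨
        (O.dir a b = true ∧ ¬ ∃ i : Fin n, a = σ i.castSucc ∧ b = σ i.succ)))

/-- A cocycle (cut) reversal: all edges of a cut `(S, V∖S)` in which every edge of
the cut is oriented, all towards `S`, are reversed. -/
def CocycleReversal (O O' : PartialOrientation G) : Prop :=
  ∃ S : Set V,
    (∀ u v, G.Adj u v → u ∉ S → v ∈ S → O.dir u v = true) ∧
    ∀ a b, (O'.dir a b = true ↔
      ((a ∈ S ∧ b ∉ S ∧ O.dir b a = true) ∨
        ((a ∈ S ↔ b ∈ S) ∧ O.dir a b = true)))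

/-- Equivalence in the generalized cycle reversal system: a finite sequence of
edge pivots and cycle reversals. -/
def GenCycleEquiv (O O' : PartialOrientation G) : Prop :=
  Relation.ReflTransGen (fun A B => EdgePivot A B ∨ CycleReversal A B) O O'

/-- Equivalence in the generalized cocycle reversal system: a finite sequence of
edge pivots and cocycle reversals. -/
def GenCocycleEquiv (O O' : PartialOrientation G) : Prop :=
  Relation.ReflTransGen (fun A B => EdgePivot A B ∨ CocycleReversal A B) O O'

/-- Equivalence in the generalized cycle-cocycle reversal system: a finite sequence
of edge pivots, cycle reversals and cocycle reversals. -/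
def GenCycleCocycleEquiv (O O' : PartialOrientation G) : Prop :=
  Relation.ReflTransGen
    (fun A B => EdgePivot A B ∨ CycleReversal A B ∨ CocycleReversal A B) O O'

/-- Equivalence in the (plain) cocycle reversal system: a finite sequence of
cocycle reversals. -/
def CocycleEquiv (O O' : PartialOrientation G) : Prop :=
  Relation.ReflTransGen (fun A B => CocycleReversal A B) O O'

end PartialOrientation

/-- The degree of a divisor: the total number of chips. -/
def degDiv {V : Type*} [Fintype V] (D : V → ℤ) : ℤ := ∑ v, D v

/-- `deg⁺` of a divisor: the sum of its positive values. -/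
def degPlus {V : Type*} [Fintype V] (D : V → ℤ) : ℤ := ∑ v, max (D v) 0

/-- A divisor is effective if all of its values are nonnegative. -/
def EffectiveDiv {V : Type*} (D : V → ℤ) : Prop := ∀ v, 0 ≤ D v

/-- Linear equivalence of divisors: `D - D'` lies in the ℤ-span of the columns of
the Laplacian, i.e. there is an integral firing vector `f` with
`D - D' = Δ f`. -/
def LinEquiv {V : Type*} [Fintype V] (G : SimpleGraph V) [DecidableRel G.Adj]
    (D D' : V → ℤ) : Prop :=
  ∃ f : V → ℤ, ∀ v, D v - D' v = ∑ u ∈ Finset.univ.filter (fun u => G.Adj v u), (f v - f u)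

/-- The Baker–Norine rank of a divisor: one less than the minimal degree of an
effective divisor `E` such that `D - E` is not linearly equivalent to any
effective divisor.  In particular `divisorRank G D = -1` iff `D` is not linearly
equivalent to an effective divisor. -/
noncomputable def divisorRank {V : Type*} [Fintype V] (G : SimpleGraph V)
    [DecidableRel G.Adj] (D : V → ℤ) : ℤ :=
  ((sInf { n : ℕ | ∃ E : V → ℤ, EffectiveDiv E ∧ degDiv E = (n : ℤ) ∧
      ¬ ∃ E' : V → ℤ, EffectiveDiv E' ∧ LinEquiv G (fun v => D v - E v) E' } : ℕ) : ℤ) - 1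

/-- The genus (cyclomatic number) of a graph: `g = |E| - |V| + 1`. -/
def graphGenus {V : Type*} [Fintype V] [DecidableEq V] (G : SimpleGraph V)
    [DecidableRel G.Adj] : ℤ :=
  (G.edgeFinset.card : ℤ) - (Fintype.card V : ℤ) + 1

/-- The number of edges of the induced subgraph `G[T]`. -/
def inducedEdgeCount {V : Type*} [Fintype V] [DecidableEq V] (G : SimpleGraph V)
    [DecidableRel G.Adj] (T : Finset V) : ℕ :=
  (G.edgeFinset.filter (fun e => e ∈ T.sym2)).card

/-- `χ̄(S, D) = |E| - |E(G[V∖S])| - |S| - deg(D|_S)`. -/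
def chiBar {V : Type*} [Fintype V] [DecidableEq V] (G : SimpleGraph V)
    [DecidableRel G.Adj] (D : V → ℤ) (S : Finset V) : ℤ :=
  (G.edgeFinset.card : ℤ) - (inducedEdgeCount G Sᶜ : ℤ) - (S.card : ℤ) - ∑ v ∈ S, D v

/-- `outdeg_A(v)`: the number of edges joining `v` to vertices outside `A`. -/
def outdegOf {V : Type*} [Fintype V] [DecidableEq V] (G : SimpleGraph V) [DecidableRel G.Adj]
    (A : Finset V) (v : V) : ℕ :=
  (Finset.univ.filter (fun u => G.Adj v u ∧ u ∉ A)).card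

/-- A divisor `D` is `q`-reduced if `D(v) ≥ 0` for `v ≠ q` and every nonempty
set `A ⊆ V ∖ {q}` contains a vertex sent into debt by firing `A`. -/
def QReduced {V : Type*} [Fintype V] [DecidableEq V] (G : SimpleGraph V) [DecidableRel G.Adj]
    (q : V) (D : V → ℤ) : Prop :=
  (∀ v, v ≠ q → 0 ≤ D v) ∧
    ∀ A : Finset V, A.Nonempty → q ∉ A → ∃ v ∈ A, D v - (outdegOf G A v : ℤ) < 0

/-- The canonical divisor `K(v) = deg(v) - 2`. -/
def canonicalDiv {V : Type*} [Fintype V] (G : SimpleGraph V) [DecidableRel G.Adj]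
    (v : V) : ℤ :=
  (G.degree v : ℤ) - 2

namespace PartialOrientation

section Aux

variable {V : Type*} [Fintype V] [DecidableEq V] {G : SimpleGraph V}

lemma dir_ne (O : PartialOrientation G) {u v : V} (h : O.dir u v = true) : u ≠ v := by
  intro h'
  exact G.irrefl (h' ▸ O.adj_of_dir u v h)

lemma dir_false_of_dir (O : PartialOrientation G) {u v : V} (h : O.dir u v = true) :
    O.dir v u = false := O.not_both u v h

lemma indeg_congr (O₁ O₂ : PartialOrientation G) (b : V)
    (h : ∀ a, O₁.dir a b = O₂.dir a b) : O₁.indeg b = O₂.indeg b := by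
  unfold indeg
  congr 1
  apply Finset.filter_congr
  intro a _
  simp [h a]

/-- `n ≥ 2` for any directed cycle data. -/
lemma cycle_two_le (O : PartialOrientation G) {n : ℕ} {σ : Fin (n+1) → V}
    (hdir : ∀ i, O.dir (σ i) (σ (i + 1)) = true) : 2 ≤ n := by
  match n with
  | 0 =>
    have h := hdir 0
    have : (0 + 1 : Fin 1) = 0 := by decide
    rw [this] at h
    exact absurd rfl (O.dir_ne h)
  | 1 =>
    have h0 := hdir 0
    have h1 := hdir 1
    have e0 : (0 + 1 : Fin 2) = 1 := by decide
    have e1 : (1 + 1 : Fin 2) = 0 := by decide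
    rw [e0] at h0; rw [e1] at h1
    rw [O.not_both _ _ h0] at h1
    exact absurd h1 (by simp)
  | (k+2) => omega

lemma no_overlap {n : ℕ} (hn : 2 ≤ n) {σ : Fin (n+1) → V} (hinj : Function.Injective σ)
    (i j : Fin (n+1)) (h1 : σ i = σ (j + 1)) (h2 : σ (i + 1) = σ j) : False := by
  have e1 : i = j + 1 := hinj h1
  have e2 : i + 1 = j := hinj h2
  have v1 := congrArg Fin.val e1
  have v2 := congrArg Fin.val e2
  rw [Fin.val_add_one] at v1 v2
  have hi : i.val < n + 1 := i.isLt
  have hj : j.val < n + 1 := j.isLt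
  rcases eq_or_ne j (Fin.last n) with hj1 | hj1 <;>
    rcases eq_or_ne i (Fin.last n) with hi1 | hi1
  · rw [if_pos hj1] at v1
    rw [if_pos hi1] at v2
    have hjv : j.val = n := by rw [hj1]; rfl
    have hiv : i.val = n := by rw [hi1]; rfl
    omega
  · rw [if_pos hj1] at v1
    rw [if_neg hi1] at v2
    have hjv : j.val = n := by rw [hj1]; rfl
    omega
  · rw [if_neg hj1] at v1
    rw [if_pos hi1] at v2
    have hiv : i.val = n := by rw [hi1]; rfl
    have hjv : j.val ≠ n := fun h => hj1 (Fin.ext h)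
    omega
  · rw [if_neg hj1] at v1
    rw [if_neg hi1] at v2
    omega

lemma exists_succ_eq_iff {n : ℕ} {σ : Fin (n+1) → V} (hinj : Function.Injective σ)
    (a : V) (j : Fin (n+1)) :
    (∃ i, a = σ (i + 1) ∧ σ j = σ i) ↔ a = σ (j + 1) := by
  constructor
  · rintro ⟨i, rfl, h2⟩
    rw [hinj h2]
  · rintro rfl
    exact ⟨j, rfl, rfl⟩

lemma exists_pred_eq_iff {n : ℕ} {σ : Fin (n+1) → V} (hinj : Function.Injective σ)
    (a : V) (j : Fin (n+1)) :
    (∃ i, a = σ i ∧ σ j = σ (i + 1)) ↔ a = σ (j - 1) := by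
  constructor
  · rintro ⟨i, rfl, h2⟩
    have : i = j - 1 := eq_sub_iff_add_eq.2 (hinj h2).symm
    rw [this]
  · rintro rfl
    exact ⟨j - 1, rfl, by rw [sub_add_cancel]⟩

lemma indeg_eq_of_edgePivot {A B : PartialOrientation G} (h : EdgePivot A B) :
    ∀ x, B.indeg x = A.indeg x := by
  obtain ⟨v, u, w, huv, hadj, hwv, hvw, hiff⟩ := h
  intro x
  by_cases hx : x = v
  · subst hx
    have hne : u ≠ w := by intro h'; rw [h'] at huv; rw [huv] at hwv; exact absurd hwv (by simp)
    have hset : Finset.univ.filter (fun a => B.dir a x = true)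
        = insert w ((Finset.univ.filter (fun a => A.dir a x = true)).erase u) := by
      ext a
      simp only [Finset.mem_filter, Finset.mem_univ, true_and, Finset.mem_insert,
        Finset.mem_erase]
      rw [hiff]
      constructor
      · rintro (⟨rfl, -⟩ | ⟨hd, hne'⟩)
        · exact Or.inl rfl
        · exact Or.inr ⟨fun h' => hne' ⟨h', rfl⟩, hd⟩
      · rintro (rfl | ⟨hne', hd⟩)
        · exact Or.inl ⟨rfl, rfl⟩
        · exact Or.inr ⟨hd, fun hh => hne' hh.1⟩
    have hwmem : w ∉ (Finset.univ.filter (fun a => A.dir a x = true)).erase u := by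
      simp [hwv]
    have humem : u ∈ Finset.univ.filter (fun a => A.dir a x = true) := by simp [huv]
    have hpos : 0 < (Finset.univ.filter (fun a => A.dir a x = true)).card :=
      Finset.card_pos.2 ⟨u, humem⟩
    unfold indeg
    rw [hset, Finset.card_insert_of_notMem hwmem, Finset.card_erase_of_mem humem]
    omega
  · apply indeg_congr
    intro a
    rw [Bool.eq_iff_iff]
    rw [hiff a x]
    constructor
    · rintro (⟨-, rfl⟩ | ⟨hd, -⟩)
      · exact absurd rfl hx
      · exact hd
    · intro hd
      exact Or.inr ⟨hd, fun hh => hx hh.2⟩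

lemma indeg_eq_of_cycleReversal {A B : PartialOrientation G} (h : CycleReversal A B) :
    ∀ x, B.indeg x = A.indeg x := by
  obtain ⟨n, σ, hinj, hdir, hiff⟩ := h
  have hn : 2 ≤ n := A.cycle_two_le hdir
  intro x
  by_cases hx : ∃ j, x = σ j
  · obtain ⟨j, rfl⟩ := hx
    have hBiff : ∀ a, B.dir a (σ j) = true ↔
        (a = σ (j + 1) ∨ (A.dir a (σ j) = true ∧ a ≠ σ (j - 1))) := by
      intro a
      rw [hiff a (σ j), exists_succ_eq_iff hinj, exists_pred_eq_iff hinj]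
    have hin : A.dir (σ (j - 1)) (σ j) = true := by
      have := hdir (j - 1)
      rwa [sub_add_cancel] at this
    have hout : A.dir (σ (j + 1)) (σ j) = false := A.not_both _ _ (hdir j)
    have hset : Finset.univ.filter (fun a => B.dir a (σ j) = true)
        = insert (σ (j + 1)) ((Finset.univ.filter (fun a => A.dir a (σ j) = true)).erase (σ (j - 1))) := by
      ext a
      simp only [Finset.mem_filter, Finset.mem_univ, true_and, Finset.mem_insert,
        Finset.mem_erase]
      rw [hBiff a]
      tauto
    have hwmem : σ (j + 1) ∉ (Finset.univ.filter (fun a => A.dir a (σ j) = true)).erase (σ (j - 1)) := by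
      simp [hout]
    have humem : σ (j - 1) ∈ Finset.univ.filter (fun a => A.dir a (σ j) = true) := by
      simp [hin]
    have hpos : 0 < (Finset.univ.filter (fun a => A.dir a (σ j) = true)).card :=
      Finset.card_pos.2 ⟨_, humem⟩
    unfold indeg
    rw [hset, Finset.card_insert_of_notMem hwmem, Finset.card_erase_of_mem humem]
    omega
  · apply indeg_congr
    intro a
    rw [Bool.eq_iff_iff, hiff a x]
    push_neg at hx
    constructor
    · rintro (⟨i, -, rfl⟩ | ⟨hd, -⟩)
      · exact absurd rfl (hx i)
      · exact hd
    · intro hd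
      refine Or.inr ⟨hd, ?_⟩
      rintro ⟨i, -, rfl⟩
      exact hx (i + 1) rfl

lemma indeg_eq_of_genCycleEquiv {A B : PartialOrientation G} (h : GenCycleEquiv A B) :
    ∀ x, A.indeg x = B.indeg x := by
  induction h with
  | refl => intro x; rfl
  | tail _ hstep ih =>
    intro x
    rw [ih x]
    rcases hstep with h' | h'
    · exact (indeg_eq_of_edgePivot h' x).symm
    · exact (indeg_eq_of_cycleReversal h' x).symm

end Aux

end PartialOrientation
namespace PartialOrientation

section Aux2

variable {V : Type*} [Fintype V] [DecidableEq V] {G : SimpleGraph V}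

/-- The result of an edge pivot. -/
def pivotOrient (O : PartialOrientation G) (v u w : V) (hadj : G.Adj w v)
    (hvw : O.dir v w = false) : PartialOrientation G where
  dir a b := decide (a = w ∧ b = v) || (O.dir a b && !decide (a = u ∧ b = v))
  adj_of_dir a b h := by
    simp only [Bool.or_eq_true, Bool.and_eq_true, decide_eq_true_eq] at h
    rcases h with ⟨rfl, rfl⟩ | ⟨h1, -⟩
    · exact hadj
    · exact O.adj_of_dir a b h1
  not_both a b h := by
    simp only [Bool.or_eq_true, Bool.and_eq_true, decide_eq_true_eq,
      Bool.not_eq_true', decide_eq_false_iff_not] at h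
    rw [Bool.eq_false_iff]
    intro h'
    simp only [Bool.or_eq_true, Bool.and_eq_true, decide_eq_true_eq,
      Bool.not_eq_true', decide_eq_false_iff_not] at h'
    rcases h with ⟨rfl, rfl⟩ | ⟨h1, -⟩
    · rcases h' with ⟨h2, h3⟩ | ⟨h1', -⟩
      · exact hadj.ne h2.symm
      · rw [h1'] at hvw; exact absurd hvw (by simp)
    · rcases h' with ⟨rfl, rfl⟩ | ⟨h1', -⟩
      · rw [h1] at hvw; exact absurd hvw (by simp)
      · rw [O.not_both a b h1] at h1'; exact absurd h1' (by simp)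

lemma pivotOrient_dir_iff (O : PartialOrientation G) (v u w : V) (hadj : G.Adj w v)
    (hvw : O.dir v w = false) (a b : V) :
    (O.pivotOrient v u w hadj hvw).dir a b = true ↔
      ((a = w ∧ b = v) ∨ (O.dir a b = true ∧ ¬(a = u ∧ b = v))) := by
  simp only [pivotOrient, Bool.or_eq_true, Bool.and_eq_true, decide_eq_true_eq,
    Bool.not_eq_true', decide_eq_false_iff_not]

lemma edgePivot_pivotOrient (O : PartialOrientation G) {v u w : V} (huv : O.dir u v = true)
    (hadj : G.Adj w v) (hwv : O.dir w v = false) (hvw : O.dir v w = false) :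
    EdgePivot O (O.pivotOrient v u w hadj hvw) :=
  ⟨v, u, w, huv, hadj, hwv, hvw, pivotOrient_dir_iff O v u w hadj hvw⟩

/-- The result of reversing a directed cycle. -/
def revCycleOrient (O : PartialOrientation G) (n : ℕ) (σ : Fin (n+1) → V)
    (hinj : Function.Injective σ) (hdir : ∀ i, O.dir (σ i) (σ (i + 1)) = true) :
    PartialOrientation G where
  dir a b := decide (∃ i, a = σ (i + 1) ∧ b = σ i)
    || (O.dir a b && !decide (∃ i, a = σ i ∧ b = σ (i + 1)))
  adj_of_dir a b h := by
    simp only [Bool.or_eq_true, Bool.and_eq_true, decide_eq_true_eq] at h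
    rcases h with ⟨i, rfl, rfl⟩ | ⟨h1, -⟩
    · exact (O.adj_of_dir _ _ (hdir i)).symm
    · exact O.adj_of_dir a b h1
  not_both a b h := by
    have hn : 2 ≤ n := O.cycle_two_le hdir
    simp only [Bool.or_eq_true, Bool.and_eq_true, decide_eq_true_eq,
      Bool.not_eq_true', decide_eq_false_iff_not] at h
    rw [Bool.eq_false_iff]
    intro h'
    simp only [Bool.or_eq_true, Bool.and_eq_true, decide_eq_true_eq,
      Bool.not_eq_true', decide_eq_false_iff_not] at h'
    rcases h with ⟨i, rfl, rfl⟩ | ⟨h1, h2⟩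
    · rcases h' with ⟨j, h3, h4⟩ | ⟨h1', h2'⟩
      · exact no_overlap hn hinj i j h3 h4
      · exact h2' ⟨i, rfl, rfl⟩
    · rcases h' with ⟨j, h3, h4⟩ | ⟨h1', -⟩
      · exact h2 ⟨j, h4, h3⟩
      · rw [O.not_both a b h1] at h1'; exact absurd h1' (by simp)

lemma revCycleOrient_dir_iff (O : PartialOrientation G) (n : ℕ) (σ : Fin (n+1) → V)
    (hinj : Function.Injective σ) (hdir : ∀ i, O.dir (σ i) (σ (i + 1)) = true) (a b : V) :
    (O.revCycleOrient n σ hinj hdir).dir a b = true ↔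
      ((∃ i, a = σ (i + 1) ∧ b = σ i) ∨
        (O.dir a b = true ∧ ¬ ∃ i, a = σ i ∧ b = σ (i + 1))) := by
  simp only [revCycleOrient, Bool.or_eq_true, Bool.and_eq_true, decide_eq_true_eq,
    Bool.not_eq_true', decide_eq_false_iff_not]

lemma cycleReversal_revCycleOrient (O : PartialOrientation G) (n : ℕ) (σ : Fin (n+1) → V)
    (hinj : Function.Injective σ) (hdir : ∀ i, O.dir (σ i) (σ (i + 1)) = true) :
    CycleReversal O (O.revCycleOrient n σ hinj hdir) :=
  ⟨n, σ, hinj, hdir, revCycleOrient_dir_iff O n σ hinj hdir⟩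

end Aux2

end PartialOrientation
namespace PartialOrientation

section Aux3

variable {V : Type*} [Fintype V] [DecidableEq V] {G : SimpleGraph V}

lemma ext_dir (O O' : PartialOrientation G) (h : ∀ a b, O.dir a b = O'.dir a b) : O = O' := by
  have hd : O.dir = O'.dir := funext fun a => funext fun b => h a b
  cases O; cases O'
  cases hd
  rfl

lemma e1_card_eq (O O' : PartialOrientation G) (h : ∀ v, O.indeg v = O'.indeg v) (v : V) :
    (Finset.univ.filter (fun u => O.dir u v = true ∧ O'.dir u v = false)).card =
    (Finset.univ.filter (fun u => O'.dir u v = true ∧ O.dir u v = false)).card := by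
  have key : ∀ A B : PartialOrientation G, A.indeg v =
      (Finset.univ.filter (fun u => A.dir u v = true ∧ B.dir u v = true)).card +
      (Finset.univ.filter (fun u => A.dir u v = true ∧ B.dir u v = false)).card := by
    intro A B
    unfold indeg
    rw [← Finset.card_filter_add_card_filter_not
      (s := Finset.univ.filter (fun u => A.dir u v = true)) (p := fun u => B.dir u v = true),
      Finset.filter_filter, Finset.filter_filter]
    congr 1
    refine congrArg Finset.card (Finset.filter_congr ?_)
    intro a _
    simp [Bool.not_eq_true]
  have h1 := key O O'
  have h2 := key O' O
  have hcomm : (Finset.univ.filter (fun u => O.dir u v = true ∧ O'.dir u v = true)).card =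
      (Finset.univ.filter (fun u => O'.dir u v = true ∧ O.dir u v = true)).card := by
    congr 1
    apply Finset.filter_congr
    intro a _
    constructor <;> (rintro ⟨x, y⟩; exact ⟨y, x⟩)
  have hv := h v
  omega

lemma exists_strong_cycle (O O' : PartialOrientation G) (P : V → Prop)
    (hstep : ∀ v, P v → ∃ w, O.dir v w = true ∧ O'.dir w v = true ∧ P w)
    (v0 : V) (h0 : P v0) :
    ∃ (n : ℕ) (σ : Fin (n+1) → V), Function.Injective σ ∧
      ∀ i, O.dir (σ i) (σ (i + 1)) = true ∧ O'.dir (σ (i + 1)) (σ i) = true := by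
  classical
  let F : {v // P v} → {v // P v} :=
    fun x => ⟨(hstep x.1 x.2).choose, (hstep x.1 x.2).choose_spec.2.2⟩
  let g : ℕ → {v // P v} := fun k => F^[k] ⟨v0, h0⟩
  have hgs : ∀ k, O.dir (g k).1 (g (k+1)).1 = true ∧ O'.dir (g (k+1)).1 (g k).1 = true := by
    intro k
    have hit : g (k+1) = F (g k) := Function.iterate_succ_apply' F k _
    rw [hit]
    exact ⟨(hstep (g k).1 (g k).2).choose_spec.1, (hstep (g k).1 (g k).2).choose_spec.2.1⟩
  have hEx : ∃ m, ∃ i, i < m ∧ g i = g m := by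
    obtain ⟨i, j, hne, heq⟩ := Finite.exists_ne_map_eq_of_infinite g
    rcases Nat.lt_or_ge i j with h | h
    · exact ⟨j, i, h, heq⟩
    · exact ⟨i, j, lt_of_le_of_ne h (Ne.symm hne), heq.symm⟩
  obtain ⟨i0, hi0, heq0⟩ := Nat.find_spec hEx
  set j0 := Nat.find hEx with hj0def
  have hmin : ∀ a b, a < b → b < j0 → g a ≠ g b :=
    fun a b hab hb h => Nat.find_min hEx hb ⟨a, hab, h⟩
  have h3 : i0 + 3 ≤ j0 := by
    by_contra hlt
    push_neg at hlt
    have hcase : j0 = i0 + 1 ∨ j0 = i0 + 2 := by omega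
    rcases hcase with h | h
    · have hd := (hgs i0).1
      have hgg : g (i0+1) = g i0 := by rw [← h]; exact heq0.symm
      rw [hgg] at hd
      exact absurd rfl (O.dir_ne hd)
    · have hd1 := (hgs i0).1
      have hd2 := (hgs (i0+1)).1
      have hgg : g (i0+1+1) = g i0 := by rw [show i0+1+1 = j0 by omega]; exact heq0.symm
      rw [hgg] at hd2
      rw [O.not_both _ _ hd1] at hd2
      exact absurd hd2 (by simp)
  set n := j0 - i0 - 1 with hndef
  refine ⟨n, fun k => (g (i0 + k.val)).1, ?_, ?_⟩
  · intro k k' hkk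
    by_contra hne'
    have hv : k.val ≠ k'.val := fun h => hne' (Fin.ext h)
    have hk : k.val ≤ n := Nat.lt_succ_iff.1 k.isLt
    have hk' : k'.val ≤ n := Nat.lt_succ_iff.1 k'.isLt
    have hgk : g (i0 + k.val) = g (i0 + k'.val) := Subtype.ext hkk
    rcases Nat.lt_or_ge k.val k'.val with h | h
    · exact hmin _ _ (by omega) (by omega) hgk
    · exact hmin _ _ (by omega) (by omega) hgk.symm
  · intro k
    have hval := Fin.val_add_one k
    by_cases hk : k = Fin.last n
    · have h1 : (k+1).val = 0 := by rw [hval, if_pos hk]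
      have hkv : k.val = n := by rw [hk]; rfl
      have hidx : i0 + n + 1 = j0 := by omega
      constructor
      · have hd := (hgs (i0 + n)).1
        rw [hidx, ← heq0] at hd
        simpa [h1, hkv] using hd
      · have hd := (hgs (i0 + n)).2
        rw [hidx, ← heq0] at hd
        simpa [h1, hkv] using hd
    · have h1 : (k+1).val = k.val + 1 := by rw [hval, if_neg hk]
      constructor
      · have hd := (hgs (i0 + k.val)).1
        simpa [h1, Nat.add_assoc] using hd
      · have hd := (hgs (i0 + k.val)).2
        simpa [h1, Nat.add_assoc] using hd

lemma step_lemma (O O' : PartialOrientation G) (hind : ∀ v, O.indeg v = O'.indeg v)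
    (hne : O ≠ O') :
    ∃ B : PartialOrientation G, (EdgePivot O B ∨ CycleReversal O B) ∧
      (Finset.univ.filter (fun p : V × V => B.dir p.1 p.2 ≠ O'.dir p.1 p.2)) ⊂
      (Finset.univ.filter (fun p : V × V => O.dir p.1 p.2 ≠ O'.dir p.1 p.2)) := by
  classical
  have hd : ∃ a b, O.dir a b ≠ O'.dir a b := by
    by_contra h
    push_neg at h
    exact hne (ext_dir O O' h)
  set P : V → Prop := fun v => ∃ u, O.dir u v = true ∧ O'.dir u v = false with hPdef
  have hPcard : ∀ v, P v ↔
      0 < (Finset.univ.filter (fun u => O.dir u v = true ∧ O'.dir u v = false)).card := by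
    intro v
    rw [Finset.card_pos]
    constructor
    · rintro ⟨u, h1, h2⟩; exact ⟨u, by simp [h1, h2]⟩
    · rintro ⟨u, hu⟩; simp only [Finset.mem_filter] at hu; exact ⟨u, hu.2⟩
  have hE2 : ∀ v, P v → ∃ w, O'.dir w v = true ∧ O.dir w v = false := by
    intro v hv
    have := (hPcard v).1 hv
    rw [e1_card_eq O O' hind v] at this
    obtain ⟨w, hw⟩ := Finset.card_pos.1 this
    simp only [Finset.mem_filter] at hw
    exact ⟨w, hw.2⟩
  have hP : ∃ v, P v := by
    obtain ⟨a, b, hab⟩ := hd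
    rcases hOab : O.dir a b with _ | _ <;> rcases hOab' : O'.dir a b with _ | _
    · rw [hOab, hOab'] at hab; exact absurd rfl hab
    · -- O false, O' true : E2 at b nonempty, so E1 at b nonempty
      refine ⟨b, (hPcard b).2 ?_⟩
      rw [e1_card_eq O O' hind b, Finset.card_pos]
      exact ⟨a, by simp [hOab, hOab']⟩
    · exact ⟨b, a, hOab, hOab'⟩
    · rw [hOab, hOab'] at hab; exact absurd rfl hab
  by_cases hpiv : ∃ v u w, O.dir u v = true ∧ O'.dir u v = false ∧ O'.dir w v = true ∧
      O.dir w v = false ∧ O.dir v w = false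
  · -- pivot case
    obtain ⟨v, u, w, huv, huv', hwv', hwv, hvw⟩ := hpiv
    have hadj : G.Adj w v := O'.adj_of_dir w v hwv'
    refine ⟨O.pivotOrient v u w hadj hvw, Or.inl (O.edgePivot_pivotOrient huv hadj hwv hvw), ?_⟩
    set B := O.pivotOrient v u w hadj hvw with hBdef
    have hBiff := pivotOrient_dir_iff O v u w hadj hvw
    have hneuw : u ≠ w := by
      intro h'; rw [h'] at huv; rw [huv] at hwv; exact absurd hwv (by simp)
    have htri : ∀ a b, B.dir a b = O.dir a b ∨ B.dir a b = O'.dir a b := by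
      intro a b
      by_cases h1 : a = w ∧ b = v
      · right
        obtain ⟨rfl, rfl⟩ := h1
        rw [(hBiff a b).2 (Or.inl ⟨rfl, rfl⟩), hwv']
      · by_cases h2 : a = u ∧ b = v
        · right
          obtain ⟨rfl, rfl⟩ := h2
          have : B.dir a b = false := by
            rw [Bool.eq_false_iff]
            intro hB
            rcases (hBiff a b).1 hB with h | ⟨-, hcon⟩
            · exact h1 h
            · exact hcon ⟨rfl, rfl⟩
          rw [this, huv']
        · left
          rw [Bool.eq_iff_iff, hBiff a b]
          constructor
          · rintro (h | ⟨h, -⟩)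
            · exact absurd h h1
            · exact h
          · intro h; exact Or.inr ⟨h, h2⟩
    have hBuv : B.dir u v = false := by
      rw [Bool.eq_false_iff]
      intro hB
      rcases (hBiff u v).1 hB with ⟨h, -⟩ | ⟨-, hcon⟩
      · exact hneuw h
      · exact hcon ⟨rfl, rfl⟩
    rw [Finset.ssubset_def]
    constructor
    · intro p hp
      simp only [Finset.mem_filter, Finset.mem_univ, true_and] at hp ⊢
      rcases htri p.1 p.2 with h | h
      · rw [← h]; exact hp
      · exact absurd h hp
    · intro hsub
      have hmem : (u, v) ∈ Finset.univ.filter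
          (fun p : V × V => O.dir p.1 p.2 ≠ O'.dir p.1 p.2) := by
        simp [huv, huv']
      have := hsub hmem
      simp only [Finset.mem_filter, Finset.mem_univ, true_and] at this
      rw [hBuv, huv'] at this
      exact this rfl
  · -- cycle case
    have hstep : ∀ v, P v → ∃ w, O.dir v w = true ∧ O'.dir w v = true ∧ P w := by
      rintro v hv
      obtain ⟨u, hu1, hu2⟩ := hv
      obtain ⟨w, hw1, hw2⟩ := hE2 v ⟨u, hu1, hu2⟩
      have hvw : O.dir v w = true := by
        by_contra h
        rw [Bool.not_eq_true] at h
        exact hpiv ⟨v, u, w, hu1, hu2, hw1, hw2, h⟩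
      exact ⟨w, hvw, hw1, ⟨v, hvw, O'.not_both w v hw1⟩⟩
    obtain ⟨v0, hP0⟩ := hP
    obtain ⟨n, σ, hinj, hstrong⟩ := exists_strong_cycle O O' P hstep v0 hP0
    have hdir : ∀ i, O.dir (σ i) (σ (i + 1)) = true := fun i => (hstrong i).1
    have hn : 2 ≤ n := O.cycle_two_le hdir
    refine ⟨O.revCycleOrient n σ hinj hdir, Or.inr (O.cycleReversal_revCycleOrient n σ hinj hdir), ?_⟩
    set B := O.revCycleOrient n σ hinj hdir with hBdef
    have hBiff := revCycleOrient_dir_iff O n σ hinj hdir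
    have hBrev : ∀ i, B.dir (σ i) (σ (i+1)) = false := by
      intro i
      rw [Bool.eq_false_iff]
      intro hB
      rcases (hBiff _ _).1 hB with ⟨j, h3, h4⟩ | ⟨-, hcon⟩
      · exact no_overlap hn hinj i j h3 h4
      · exact hcon ⟨i, rfl, rfl⟩
    have htri : ∀ a b, B.dir a b = O.dir a b ∨ B.dir a b = O'.dir a b := by
      intro a b
      by_cases h1 : ∃ i, a = σ (i + 1) ∧ b = σ i
      · right
        obtain ⟨i, rfl, rfl⟩ := h1
        rw [(hBiff _ _).2 (Or.inl ⟨i, rfl, rfl⟩), (hstrong i).2]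
      · by_cases h2 : ∃ i, a = σ i ∧ b = σ (i + 1)
        · right
          obtain ⟨i, rfl, rfl⟩ := h2
          rw [hBrev i, O'.not_both _ _ (hstrong i).2]
        · left
          rw [Bool.eq_iff_iff, hBiff a b]
          constructor
          · rintro (h | ⟨h, -⟩)
            · exact absurd h h1
            · exact h
          · intro h; exact Or.inr ⟨h, h2⟩
    rw [Finset.ssubset_def]
    constructor
    · intro p hp
      simp only [Finset.mem_filter, Finset.mem_univ, true_and] at hp ⊢
      rcases htri p.1 p.2 with h | h
      · rw [← h]; exact hp
      · exact absurd h hp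
    · intro hsub
      have hmem : (σ 0, σ (0 + 1)) ∈ Finset.univ.filter
          (fun p : V × V => O.dir p.1 p.2 ≠ O'.dir p.1 p.2) := by
        simp only [Finset.mem_filter, Finset.mem_univ, true_and]
        rw [hdir 0, O'.not_both _ _ (hstrong 0).2]
        simp
      have := hsub hmem
      simp only [Finset.mem_filter, Finset.mem_univ, true_and] at this
      rw [hBrev 0, O'.not_both _ _ (hstrong 0).2] at this
      exact this rfl

lemma genCycleEquiv_of_indeg_eq_aux (N : ℕ) :
    ∀ O O' : PartialOrientation G, (∀ v, O.indeg v = O'.indeg v) →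
      (Finset.univ.filter (fun p : V × V => O.dir p.1 p.2 ≠ O'.dir p.1 p.2)).card ≤ N →
      GenCycleEquiv O O' := by
  induction N with
  | zero =>
    intro O O' hind hc
    have hemp : (Finset.univ.filter (fun p : V × V => O.dir p.1 p.2 ≠ O'.dir p.1 p.2)) = ∅ :=
      Finset.card_eq_zero.1 (Nat.le_zero.1 hc)
    have : O = O' := by
      apply ext_dir
      intro a b
      by_contra h
      have : (a, b) ∈ Finset.univ.filter
          (fun p : V × V => O.dir p.1 p.2 ≠ O'.dir p.1 p.2) := by simp [h]
      rw [hemp] at this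
      exact absurd this (Finset.notMem_empty _)
    rw [this]
    exact Relation.ReflTransGen.refl
  | succ N ih =>
    intro O O' hind hc
    by_cases he : O = O'
    · rw [he]
      exact Relation.ReflTransGen.refl
    · obtain ⟨B, hmove, hss⟩ := step_lemma O O' hind he
      have hindB : ∀ v, B.indeg v = O'.indeg v := by
        intro v
        rcases hmove with h | h
        · rw [indeg_eq_of_edgePivot h v]; exact hind v
        · rw [indeg_eq_of_cycleReversal h v]; exact hind v
      have hcB := Finset.card_lt_card hss
      exact Relation.ReflTransGen.head hmove (ih B O' hindB (by omega))

lemma genCycleEquiv_of_indeg_eq (O O' : PartialOrientation G)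
    (h : ∀ v, O.indeg v = O'.indeg v) : GenCycleEquiv O O' :=
  genCycleEquiv_of_indeg_eq_aux _ O O' h le_rfl

end Aux3

end PartialOrientation

/-- Two partial orientations are equivalent in the generalized cycle
reversal system iff their associated divisors are equal. -/
theorem stmt0 {V : Type*} [Fintype V] [DecidableEq V] (G : SimpleGraph V)
    [DecidableRel G.Adj] (hG : G.Connected)
    (O O' : PartialOrientation G) :
    PartialOrientation.GenCycleEquiv O O' ↔ O.div = O'.div := by
  constructor
  · intro h
    funext v
    unfold PartialOrientation.div
    rw [PartialOrientation.indeg_eq_of_genCycleEquiv h v]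
  · intro h
    apply PartialOrientation.genCycleEquiv_of_indeg_eq
    intro v
    have hv := congrFun h v
    unfold PartialOrientation.div at hv
    omega
end

section
/- Two partial orientations O and O' of a finite connected simple graph G are equivalent in the generalized cycle-cocycle reversal system (i.e., one can be obtained from the other by a finite sequence of edge pivots, cycle reversals and cocycle reversals) if and only if their associated divisors D_O and D_{O'} are linearly equivalent. -/
set_option linter.unusedSectionVars false
namespace StmtAux

open Finset PartialOrientation

variable {V : Type*} [Fintype V] [DecidableEq V] {G : SimpleGraph V} [DecidableRel G.Adj]

/-- Build a partial orientation from a proposition. -/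
noncomputable def ofProp (P : V → V → Prop) (h1 : ∀ a b, P a b → G.Adj a b)
    (h2 : ∀ a b, P a b → ¬ P b a) : PartialOrientation G where
  dir a b := @decide (P a b) (Classical.dec _)
  adj_of_dir a b h := h1 a b (@of_decide_eq_true (P a b) (Classical.dec _) h)
  not_both a b h :=
    @decide_eq_false (P b a) (Classical.dec _) (h2 a b (@of_decide_eq_true (P a b) (Classical.dec _) h))

lemma ofProp_dir (P : V → V → Prop) (h1 : ∀ a b, P a b → G.Adj a b)
    (h2 : ∀ a b, P a b → ¬ P b a) (a b : V) :
    (ofProp P h1 h2).dir a b = true ↔ P a b := by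
  simp [ofProp]

/-- in-neighbourhood -/
def Nin (O : PartialOrientation G) (v : V) : Finset V :=
  Finset.univ.filter (fun u => O.dir u v = true)

lemma indeg_eq (O : PartialOrientation G) (v : V) : O.indeg v = (Nin O v).card := rfl

lemma mem_Nin {O : PartialOrientation G} {v u : V} : u ∈ Nin O v ↔ O.dir u v = true := by
  simp [Nin]

lemma dir_false_of_dir {O : PartialOrientation G} {a b : V} (h : O.dir a b = true) :
    O.dir b a = false := O.not_both a b h

lemma not_dir_self (O : PartialOrientation G) (a : V) : O.dir a a = false := by
  by_contra h
  have := O.adj_of_dir a a (by simpa using h)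
  exact G.loopless.irrefl a this

lemma po_ext {O O' : PartialOrientation G} (h : ∀ a b, (O.dir a b = true ↔ O'.dir a b = true)) :
    O = O' := by
  cases O with
  | mk d h1 h2 =>
    cases O' with
    | mk d' h1' h2' =>
      have : d = d' := by
        funext a b
        have := h a b
        simp only at this
        cases hd : d a b <;> cases hd' : d' a b <;> simp [hd, hd'] at this ⊢
      subst this
      rfl

section Pivot

lemma pivot_Nin {O O₁ : PartialOrientation G} {v u w : V}
    (huv : O.dir u v = true) (hwv : O.dir w v = false)
    (hchar : ∀ a b, (O₁.dir a b = true ↔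
      ((a = w ∧ b = v) ∨ (O.dir a b = true ∧ ¬(a = u ∧ b = v))))) :
    Nin O₁ v = insert w ((Nin O v).erase u) := by
  ext x
  simp only [mem_Nin, hchar, mem_insert, mem_erase]
  tauto

lemma pivot_indeg {O O₁ : PartialOrientation G} (h : EdgePivot O O₁) (y : V) :
    O₁.indeg y = O.indeg y := by
  obtain ⟨v, u, w, huv, hadj, hwv, hvw, hchar⟩ := h
  rcases eq_or_ne y v with rfl | hy
  · rw [indeg_eq, indeg_eq, pivot_Nin huv hwv hchar]
    have hwNin : w ∉ (Nin O y).erase u := by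
      simp [mem_Nin, hwv]
    have huNin : u ∈ Nin O y := mem_Nin.2 huv
    rw [Finset.card_insert_of_notMem hwNin, Finset.card_erase_of_mem huNin]
    have : 0 < (Nin O y).card := Finset.card_pos.2 ⟨u, huNin⟩
    omega
  · rw [indeg_eq, indeg_eq]
    congr 1
    ext x
    simp only [mem_Nin, hchar]
    have hy' : ¬ (y = v) := hy
    tauto

end Pivot

end StmtAux

namespace StmtAux

open Finset PartialOrientation

variable {V : Type*} [Fintype V] [DecidableEq V] {G : SimpleGraph V} [DecidableRel G.Adj]

section Cycle

lemma cycle_two_le {O : PartialOrientation G} {n : ℕ} {σ : Fin (n + 1) → V}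
    (hcyc : ∀ i : Fin (n + 1), O.dir (σ i) (σ (i + 1)) = true) : 2 ≤ n := by
  match n, σ, hcyc with
  | 0, σ, hcyc =>
    have h := hcyc 0
    have : (0 + 1 : Fin 1) = 0 := by decide
    rw [this] at h
    simpa [not_dir_self] using h
  | 1, σ, hcyc =>
    have h0 := hcyc 0
    have h1 := hcyc 1
    have e0 : (0 + 1 : Fin 2) = 1 := by decide
    have e1 : (1 + 1 : Fin 2) = 0 := by decide
    rw [e0] at h0; rw [e1] at h1
    have := dir_false_of_dir h0
    rw [this] at h1
    exact absurd h1 (by simp)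
  | (n + 2), σ, hcyc => omega

lemma cycle_Nin_off {O O₁ : PartialOrientation G} {n : ℕ} {σ : Fin (n + 1) → V}
    (hchar : ∀ a b, (O₁.dir a b = true ↔
      ((∃ i : Fin (n + 1), a = σ (i + 1) ∧ b = σ i) ∨
        (O.dir a b = true ∧ ¬ ∃ i : Fin (n + 1), a = σ i ∧ b = σ (i + 1)))))
    {y : V} (hy : ∀ j, y ≠ σ j) : Nin O₁ y = Nin O y := by
  ext x
  simp only [mem_Nin, hchar]
  constructor
  · rintro (⟨i, -, h2⟩ | ⟨hx, -⟩)
    · exact absurd h2 (hy i)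
    · exact hx
  · intro hx
    refine Or.inr ⟨hx, ?_⟩
    rintro ⟨i, -, h2⟩
    exact hy (i + 1) h2

lemma cycle_Nin_on {O O₁ : PartialOrientation G} {n : ℕ} {σ : Fin (n + 1) → V}
    (hinj : Function.Injective σ)
    (hcyc : ∀ i : Fin (n + 1), O.dir (σ i) (σ (i + 1)) = true)
    (hchar : ∀ a b, (O₁.dir a b = true ↔
      ((∃ i : Fin (n + 1), a = σ (i + 1) ∧ b = σ i) ∨
        (O.dir a b = true ∧ ¬ ∃ i : Fin (n + 1), a = σ i ∧ b = σ (i + 1)))))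
    (j : Fin (n + 1)) :
    Nin O₁ (σ j) = insert (σ (j + 1)) ((Nin O (σ j)).erase (σ (j - 1))) := by
  ext x
  simp only [mem_Nin, hchar, mem_insert, mem_erase]
  constructor
  · rintro (⟨i, rfl, h2⟩ | ⟨hx, hne⟩)
    · have : i = j := hinj h2.symm
      subst this
      exact Or.inl rfl
    · refine Or.inr ⟨?_, hx⟩
      intro hxe
      apply hne
      refine ⟨j - 1, hxe, ?_⟩
      rw [sub_add_cancel]
  · rintro (rfl | ⟨hne, hx⟩)
    · exact Or.inl ⟨j, rfl, rfl⟩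
    · refine Or.inr ⟨hx, ?_⟩
      rintro ⟨i, rfl, h2⟩
      have : j = i + 1 := hinj h2
      apply hne
      rw [this]
      rw [add_sub_cancel_right]

lemma cycle_indeg {O O₁ : PartialOrientation G} (h : CycleReversal O O₁) (y : V) :
    O₁.indeg y = O.indeg y := by
  obtain ⟨n, σ, hinj, hcyc, hchar⟩ := h
  have hn : 2 ≤ n := cycle_two_le hcyc
  by_cases hy : ∃ j, y = σ j
  · obtain ⟨j, rfl⟩ := hy
    rw [indeg_eq, indeg_eq, cycle_Nin_on hinj hcyc hchar j]
    have hmem : σ (j - 1) ∈ Nin O (σ j) := by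
      rw [mem_Nin]
      have := hcyc (j - 1)
      rwa [sub_add_cancel] at this
    have hnot : σ (j + 1) ∉ (Nin O (σ j)).erase (σ (j - 1)) := by
      intro hmem'
      have := (Finset.mem_erase.1 hmem').2
      rw [mem_Nin] at this
      have h2 := dir_false_of_dir (hcyc j)
      rw [this] at h2
      exact absurd h2 (by simp)
    rw [Finset.card_insert_of_notMem hnot, Finset.card_erase_of_mem hmem]
    have : 0 < (Nin O (σ j)).card := Finset.card_pos.2 ⟨_, hmem⟩
    omega
  · push_neg at hy
    rw [indeg_eq, indeg_eq, cycle_Nin_off hchar hy]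

end Cycle

end StmtAux

namespace StmtAux

open Finset PartialOrientation

variable {V : Type*} [Fintype V] [DecidableEq V] {G : SimpleGraph V} [DecidableRel G.Adj]

section Cocycle

open Classical in
/-- number of neighbours of `v` outside `S` -/
noncomputable def cutdegS (G : SimpleGraph V) [DecidableRel G.Adj] (S : Set V) (v : V) : ℕ :=
  (Finset.univ.filter (fun u => G.Adj v u ∧ u ∉ S)).card

open Classical in
noncomputable def indegS (G : SimpleGraph V) [DecidableRel G.Adj] (S : Set V) (v : V) : ℕ :=
  (Finset.univ.filter (fun u => G.Adj v u ∧ u ∈ S)).card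

lemma cocycle_indeg_mem {O O₁ : PartialOrientation G} {S : Set V}
    (hcut : ∀ u v, G.Adj u v → u ∉ S → v ∈ S → O.dir u v = true)
    (hchar : ∀ a b, (O₁.dir a b = true ↔
      ((a ∈ S ∧ b ∉ S ∧ O.dir b a = true) ∨
        ((a ∈ S ↔ b ∈ S) ∧ O.dir a b = true))))
    {v : V} (hv : v ∈ S) : O₁.indeg v + cutdegS G S v = O.indeg v := by
  classical
  have h1 : Nin O₁ v = (Nin O v).filter (fun x => x ∈ S) := by
    ext x
    simp only [mem_Nin, hchar, Finset.mem_filter]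
    constructor
    · rintro (⟨-, hvS, -⟩ | ⟨hiff, hx⟩)
      · exact absurd hv hvS
      · exact ⟨hx, hiff.2 hv⟩
    · rintro ⟨hx, hxS⟩
      exact Or.inr ⟨by tauto, hx⟩
  have h2 : (Nin O v).filter (fun x => x ∉ S) =
      Finset.univ.filter (fun u => G.Adj v u ∧ u ∉ S) := by
    ext x
    simp only [Finset.mem_filter, mem_Nin, Finset.mem_univ, true_and]
    constructor
    · rintro ⟨hx, hxS⟩
      exact ⟨(O.adj_of_dir x v hx).symm, hxS⟩
    · rintro ⟨hadj, hxS⟩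
      exact ⟨hcut x v hadj.symm hxS hv, hxS⟩
  have h3 := Finset.card_filter_add_card_filter_not
    (s := Nin O v) (p := fun x => x ∈ S)
  rw [indeg_eq, indeg_eq, h1, cutdegS, ← h2]
  convert h3 using 3

lemma cocycle_indeg_not_mem {O O₁ : PartialOrientation G} {S : Set V}
    (hcut : ∀ u v, G.Adj u v → u ∉ S → v ∈ S → O.dir u v = true)
    (hchar : ∀ a b, (O₁.dir a b = true ↔
      ((a ∈ S ∧ b ∉ S ∧ O.dir b a = true) ∨
        ((a ∈ S ↔ b ∈ S) ∧ O.dir a b = true))))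
    {v : V} (hv : v ∉ S) : O₁.indeg v = O.indeg v + indegS G S v := by
  classical
  have hNinO : ∀ x, x ∈ Nin O v → x ∉ S := by
    intro x hx hxS
    rw [mem_Nin] at hx
    have := hcut v x ((O.adj_of_dir x v hx).symm) hv hxS
    have h2 := dir_false_of_dir this
    rw [hx] at h2
    exact absurd h2 (by simp)
  have h1 : Nin O₁ v = (Finset.univ.filter (fun u => G.Adj v u ∧ u ∈ S)) ∪ Nin O v := by
    ext x
    simp only [mem_Nin, hchar, Finset.mem_union, Finset.mem_filter, Finset.mem_univ, true_and]
    constructor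
    · rintro (⟨hxS, -, hdir⟩ | ⟨hiff, hx⟩)
      · exact Or.inl ⟨O.adj_of_dir v x hdir, hxS⟩
      · exact Or.inr hx
    · rintro (⟨hadj, hxS⟩ | hx)
      · exact Or.inl ⟨hxS, hv, hcut v x hadj hv hxS⟩
      · have hxS := hNinO x (mem_Nin.2 hx)
        exact Or.inr ⟨by tauto, hx⟩
  have hdisj : Disjoint (Finset.univ.filter (fun u => G.Adj v u ∧ u ∈ S)) (Nin O v) := by
    rw [Finset.disjoint_left]
    intro x hx hx2
    exact hNinO x hx2 (Finset.mem_filter.1 hx).2.2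
  rw [indeg_eq, indeg_eq, h1, Finset.card_union_of_disjoint hdisj, indegS]
  omega

end Cocycle

section LinEquivBasics

lemma linEquiv_of_div_eq {D D' : V → ℤ} (h : ∀ v, D v = D' v) : LinEquiv G D D' := by
  refine ⟨0, fun v => ?_⟩
  simp [h v]

lemma linEquiv_trans {D D' D'' : V → ℤ} (h1 : LinEquiv G D D') (h2 : LinEquiv G D' D'') :
    LinEquiv G D D'' := by
  obtain ⟨f, hf⟩ := h1
  obtain ⟨g, hg⟩ := h2
  refine ⟨f + g, fun v => ?_⟩
  have := hf v
  have := hg v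
  have hsum : ∑ u ∈ Finset.univ.filter (fun u => G.Adj v u), ((f + g) v - (f + g) u)
      = (∑ u ∈ Finset.univ.filter (fun u => G.Adj v u), (f v - f u))
        + ∑ u ∈ Finset.univ.filter (fun u => G.Adj v u), (g v - g u) := by
    rw [← Finset.sum_add_distrib]
    apply Finset.sum_congr rfl
    intro u _
    simp
    ring
  rw [hsum]
  omega

lemma div_sub_div (O O₁ : PartialOrientation G) (v : V) :
    O.div v - O₁.div v = (O.indeg v : ℤ) - (O₁.indeg v : ℤ) := by
  simp [PartialOrientation.div]

lemma step_linEquiv {O O₁ : PartialOrientation G}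
    (h : EdgePivot O O₁ ∨ CycleReversal O O₁ ∨ CocycleReversal O O₁) :
    LinEquiv G O.div O₁.div := by
  classical
  rcases h with h | h | h
  · refine linEquiv_of_div_eq (fun v => ?_)
    simp [PartialOrientation.div, pivot_indeg h v]
  · refine linEquiv_of_div_eq (fun v => ?_)
    simp [PartialOrientation.div, cycle_indeg h v]
  · obtain ⟨S, hcut, hchar⟩ := h
    refine ⟨fun v => if v ∈ S then (1 : ℤ) else 0, fun v => ?_⟩
    rw [div_sub_div]
    by_cases hv : v ∈ S
    · have hind := cocycle_indeg_mem hcut hchar hv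
      have hLHS : (O.indeg v : ℤ) - (O₁.indeg v : ℤ) = (cutdegS G S v : ℤ) := by
        omega
      rw [hLHS]
      have : ∀ u ∈ Finset.univ.filter (fun u => G.Adj v u),
          ((if v ∈ S then (1:ℤ) else 0) - (if u ∈ S then (1:ℤ) else 0))
          = (if u ∉ S then (1:ℤ) else 0) := by
        intro u _
        by_cases hu : u ∈ S <;> simp [hv, hu]
      rw [Finset.sum_congr rfl this, Finset.sum_boole]
      have hset : (Finset.univ.filter (fun u => G.Adj v u)).filter (fun u => u ∉ S) =
          Finset.univ.filter (fun u => G.Adj v u ∧ u ∉ S) := by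
        ext u
        simp [Finset.mem_filter]
      rw [hset, cutdegS]
    · have hind := cocycle_indeg_not_mem hcut hchar hv
      have hLHS : (O.indeg v : ℤ) - (O₁.indeg v : ℤ) = -(indegS G S v : ℤ) := by
        omega
      rw [hLHS]
      have : ∀ u ∈ Finset.univ.filter (fun u => G.Adj v u),
          ((if v ∈ S then (1:ℤ) else 0) - (if u ∈ S then (1:ℤ) else 0))
          = -(if u ∈ S then (1:ℤ) else 0) := by
        intro u _
        by_cases hu : u ∈ S <;> simp [hv, hu]
      rw [Finset.sum_congr rfl this, Finset.sum_neg_distrib, Finset.sum_boole]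
      have hset : (Finset.univ.filter (fun u => G.Adj v u)).filter (fun u => u ∈ S) =
          Finset.univ.filter (fun u => G.Adj v u ∧ u ∈ S) := by
        ext u
        simp [Finset.mem_filter]
      rw [hset, indegS]

lemma forward_dir {O O' : PartialOrientation G} (h : GenCycleCocycleEquiv O O') :
    LinEquiv G O.div O'.div := by
  induction h with
  | refl => exact linEquiv_of_div_eq (fun _ => rfl)
  | tail _ hstep ih => exact linEquiv_trans ih (step_linEquiv hstep)

end LinEquivBasics

end StmtAux

namespace StmtAux

open Finset PartialOrientation

variable {V : Type*} [Fintype V] [DecidableEq V] {G : SimpleGraph V} [DecidableRel G.Adj]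

section ClaimA

open Classical in
/-- number of discrepancies: pairs oriented in the target `Ot` but not in `O`. -/
noncomputable def Phi (Ot O : PartialOrientation G) : ℕ :=
  ((Finset.univ : Finset (V × V)).filter
    (fun p => Ot.dir p.1 p.2 = true ∧ O.dir p.1 p.2 = false)).card

lemma eq_of_phi_zero {Ot O : PartialOrientation G} (hind : ∀ v, O.indeg v = Ot.indeg v)
    (h : Phi Ot O = 0) : O = Ot := by
  classical
  have hdir : ∀ a b, Ot.dir a b = true → O.dir a b = true := by
    intro a b hab
    by_contra hOf
    have hOf' : O.dir a b = false := by
      cases hO : O.dir a b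
      · rfl
      · exact absurd hO hOf
    have : ((a, b) : V × V) ∈ (Finset.univ : Finset (V × V)).filter
        (fun p => Ot.dir p.1 p.2 = true ∧ O.dir p.1 p.2 = false) := by
      simp [hab, hOf']
    rw [Phi, Finset.card_eq_zero] at h
    rw [h] at this
    exact absurd this (Finset.notMem_empty _)
  have hsets : ∀ v, Nin O v = Nin Ot v := by
    intro v
    have hsub : Nin Ot v ⊆ Nin O v := by
      intro x hx
      exact mem_Nin.2 (hdir x v (mem_Nin.1 hx))
    exact (Finset.eq_of_subset_of_card_le hsub (by
      rw [← indeg_eq, ← indeg_eq, hind v])).symm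
  apply po_ext
  intro a b
  constructor
  · intro h1
    have : a ∈ Nin O b := mem_Nin.2 h1
    rw [hsets b] at this
    exact mem_Nin.1 this
  · exact hdir a b

lemma exchange {Ot O : PartialOrientation G} (hind : ∀ v, O.indeg v = Ot.indeg v)
    {x y : V} (hx : O.dir x y = true) (hx' : Ot.dir x y = false) :
    ∃ w, Ot.dir w y = true ∧ O.dir w y = false := by
  classical
  by_contra hcon
  push_neg at hcon
  have hsub : Nin Ot y ⊆ Nin O y := by
    intro w hw
    have := hcon w (mem_Nin.1 hw)
    rw [mem_Nin]
    cases hO : O.dir w y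
    · exact absurd hO this
    · rfl
  have heq : Nin Ot y = Nin O y :=
    Finset.eq_of_subset_of_card_le hsub (by rw [← indeg_eq, ← indeg_eq, hind y])
  have : x ∈ Nin Ot y := by rw [heq]; exact mem_Nin.2 hx
  rw [mem_Nin] at this
  rw [this] at hx'
  exact absurd hx' (by simp)

lemma dir_ne_true_iff (b : Bool) : b = false ↔ ¬ b = true := by
  cases b <;> simp

/-- Case 1 of the chase: a pivot move decreasing `Phi`. -/
lemma exists_pivot_step {Ot O : PartialOrientation G} (hind : ∀ v, O.indeg v = Ot.indeg v)
    {a b : V} (h1 : Ot.dir a b = true) (h2 : O.dir a b = false) (h3 : O.dir b a = false) :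
    ∃ O₁ : PartialOrientation G, EdgePivot O O₁ ∧ Phi Ot O₁ < Phi Ot O ∧
      (∀ v, O₁.indeg v = Ot.indeg v) := by
  classical
  have h1' : Ot.dir b a = false := dir_false_of_dir h1
  have hOta : Ot.dir a b = true := h1
  -- find u with O.dir u b, not Ot.dir u b
  have hx' : Ot.dir b a = false := h1'
  obtain ⟨u, hu1, hu2⟩ : ∃ u, O.dir u b = true ∧ Ot.dir u b = false := by
    by_contra hcon
    push_neg at hcon
    have hsub : Nin O b ⊆ Nin Ot b := by
      intro w hw
      have := hcon w (mem_Nin.1 hw)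
      rw [mem_Nin]
      cases hO : Ot.dir w b
      · exact absurd hO this
      · rfl
    have heq : Nin O b = Nin Ot b :=
      Finset.eq_of_subset_of_card_le hsub (by rw [← indeg_eq, ← indeg_eq, hind b])
    have : a ∈ Nin O b := by rw [heq]; exact mem_Nin.2 h1
    rw [mem_Nin] at this
    rw [this] at h2
    exact absurd h2 (by simp)
  have hadjab : G.Adj a b := Ot.adj_of_dir a b h1
  have hab : a ≠ b := G.ne_of_adj hadjab
  set P : V → V → Prop := fun x y => (x = a ∧ y = b) ∨ (O.dir x y = true ∧ ¬(x = u ∧ y = b))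
    with hP
  have hPadj : ∀ x y, P x y → G.Adj x y := by
    rintro x y (⟨rfl, rfl⟩ | ⟨hd, -⟩)
    · exact hadjab
    · exact O.adj_of_dir x y hd
  have hPnb : ∀ x y, P x y → ¬ P y x := by
    rintro x y (⟨rfl, rfl⟩ | ⟨hd, hne⟩) h'
    · rcases h' with ⟨rfl, h⟩ | ⟨hd', -⟩
      · exact hab h.symm
      · rw [hd'] at h3; exact absurd h3 (by simp)
    · rcases h' with ⟨rfl, rfl⟩ | ⟨hd', -⟩
      · rw [hd] at h3; exact absurd h3 (by simp)
      · have := dir_false_of_dir hd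
        rw [hd'] at this
        exact absurd this (by simp)
  refine ⟨ofProp P hPadj hPnb, ?_, ?_, ?_⟩
  · exact ⟨b, u, a, hu1, hadjab, h2, h3, fun x y => by
      rw [ofProp_dir]⟩
  · have hpiv : EdgePivot O (ofProp P hPadj hPnb) := ⟨b, u, a, hu1, hadjab, h2, h3,
      fun x y => by rw [ofProp_dir]⟩
    set O₁ := ofProp P hPadj hPnb
    have hsub : ((Finset.univ : Finset (V × V)).filter
        (fun p => Ot.dir p.1 p.2 = true ∧ O₁.dir p.1 p.2 = false)) ⊆
        (((Finset.univ : Finset (V × V)).filter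
        (fun p => Ot.dir p.1 p.2 = true ∧ O.dir p.1 p.2 = false)).erase (a, b)) := by
      intro p hp
      simp only [Finset.mem_filter, Finset.mem_univ, true_and] at hp
      obtain ⟨hp1, hp2⟩ := hp
      rw [Finset.mem_erase, Finset.mem_filter]
      constructor
      · intro hpe
        have : O₁.dir a b = true := by
          rw [ofProp_dir]; exact Or.inl ⟨rfl, rfl⟩
        rw [hpe] at hp2
        simp only at hp2
        rw [this] at hp2
        exact absurd hp2 (by simp)
      · refine ⟨Finset.mem_univ _, hp1, ?_⟩
        rw [dir_ne_true_iff] at hp2 ⊢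
        intro hOp
        apply hp2
        rw [ofProp_dir]
        refine Or.inr ⟨hOp, ?_⟩
        rintro ⟨rfl, rfl⟩
        rw [hu2] at hp1
        exact absurd hp1 (by simp)
    have hmem : ((a, b) : V × V) ∈ (Finset.univ : Finset (V × V)).filter
        (fun p => Ot.dir p.1 p.2 = true ∧ O.dir p.1 p.2 = false) := by
      simp [h1, h2]
    calc Phi Ot O₁ ≤ _ := Finset.card_le_card hsub
    _ < Phi Ot O := by
      rw [Finset.card_erase_of_mem hmem]
      have : 0 < Phi Ot O := Finset.card_pos.2 ⟨(a, b), hmem⟩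
      rw [Phi] at this ⊢
      omega
  · intro v
    rw [pivot_indeg ⟨b, u, a, hu1, hadjab, h2, h3, fun x y => by rw [ofProp_dir]⟩ v]
    exact hind v

end ClaimA

end StmtAux

namespace StmtAux

open Finset PartialOrientation

variable {V : Type*} [Fintype V] [DecidableEq V] {G : SimpleGraph V} [DecidableRel G.Adj]

section ClaimACycle

/-- Case 2 of the chase: a cycle reversal decreasing `Phi`. -/
lemma exists_cycle_step {Ot O : PartialOrientation G} (hind : ∀ v, O.indeg v = Ot.indeg v)
    {a₀ b₀ : V} (hseed : O.dir b₀ a₀ = true ∧ Ot.dir a₀ b₀ = true)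
    (hrev : ∀ x y, Ot.dir x y = true → O.dir x y = false → O.dir y x = true) :
    ∃ O₁ : PartialOrientation G, CycleReversal O O₁ ∧ Phi Ot O₁ < Phi Ot O ∧
      (∀ v, O₁.indeg v = Ot.indeg v) := by
  classical
  set S : V → V → Prop := fun x y => O.dir x y = true ∧ Ot.dir y x = true with hSdef
  have hstep : ∀ x y, S x y → ∃ z, S y z := by
    rintro x y ⟨hxy, hyx⟩
    have hxOt : Ot.dir x y = false := dir_false_of_dir hyx
    obtain ⟨w, hw1, hw2⟩ := exchange hind hxy hxOt
    exact ⟨w, hrev w y hw1 hw2, hw1⟩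
  -- build an infinite S-chain
  let T := {p : V × V // S p.1 p.2}
  have hne : T := ⟨(b₀, a₀), hseed⟩
  let F : T → T := fun t => ⟨(t.1.2, Classical.choose (hstep t.1.1 t.1.2 t.2)),
    Classical.choose_spec (hstep t.1.1 t.1.2 t.2)⟩
  let gT : ℕ → T := fun k => F^[k] hne
  let g : ℕ → V := fun k => (gT k).1.1
  have hg : ∀ k, S (g k) (g (k + 1)) := by
    intro k
    have hit : gT (k + 1) = F (gT k) := Function.iterate_succ_apply' F k hne
    have h1 : g (k + 1) = (gT k).1.2 := by
      rw [show g (k+1) = (gT (k+1)).1.1 from rfl, hit]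
    rw [h1]
    exact (gT k).2
  -- pigeonhole for a repeat
  obtain ⟨i', j', hij', heq'⟩ : ∃ i' j' : Fin (Fintype.card V + 1),
      i' ≠ j' ∧ g i'.val = g j'.val := by
    have hcard : Fintype.card V < Fintype.card (Fin (Fintype.card V + 1)) := by simp
    obtain ⟨i', j', hne', heq'⟩ := Fintype.exists_ne_map_eq_of_card_lt
      (fun k : Fin (Fintype.card V + 1) => g k.val) hcard
    exact ⟨i', j', hne', heq'⟩
  have hex : ∃ m, ∃ i, i < m ∧ g i = g m := by
    rcases lt_or_gt_of_ne hij' with hlt | hgt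
    · exact ⟨j'.val, i'.val, hlt, heq'⟩
    · exact ⟨i'.val, j'.val, hgt, heq'.symm⟩
  obtain ⟨i₀, hi₀lt, hi₀eq⟩ := Nat.find_spec hex
  set n := Nat.find hex - i₀ - 1 with hn_def
  have hjeq : i₀ + (n + 1) = Nat.find hex := by omega
  let σ : Fin (n + 1) → V := fun k => g (i₀ + k.val)
  have hσ : ∀ k : Fin (n + 1), σ k = g (i₀ + k.val) := fun _ => rfl
  have hσS : ∀ k : Fin (n + 1), S (σ k) (σ (k + 1)) := by
    intro k
    rcases eq_or_lt_of_le (Nat.lt_succ_iff.mp k.2) with hk | hk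
    · -- k.val = n, wrap-around
      have hwrap : (k + 1 : Fin (n+1)) = 0 := by
        have : k = Fin.last n := Fin.ext hk
        rw [this, Fin.last_add_one]
      rw [hσ, hσ, hwrap, hk]
      have h' := hg (i₀ + n)
      rw [show i₀ + n + 1 = Nat.find hex by omega] at h'
      have h0 : i₀ + ((0 : Fin (n+1)) : ℕ) = i₀ := by simp
      rw [h0, hi₀eq]
      exact h'
    · have hk1 : ((k + 1 : Fin (n+1)) : ℕ) = k.val + 1 := by
        rw [Fin.val_add_one_of_lt]
        exact Fin.lt_iff_val_lt_val.mpr (by simpa using hk)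
      rw [hσ, hσ, hk1, show i₀ + (k.val + 1) = i₀ + k.val + 1 by omega]
      exact hg (i₀ + k.val)
  have hinj : Function.Injective σ := by
    intro k₁ k₂ he
    by_contra hnek
    have hne2 : k₁.val ≠ k₂.val := fun h => hnek (Fin.ext h)
    rcases Nat.lt_or_ge k₁.val k₂.val with hlt | hge
    · have hkb := k₂.2
      exact absurd ⟨i₀ + k₁.val, by omega, he⟩
        (Nat.find_min hex (show i₀ + k₂.val < Nat.find hex by omega))
    · have hkb := k₁.2
      exact absurd ⟨i₀ + k₂.val, by omega, he.symm⟩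
        (Nat.find_min hex (show i₀ + k₁.val < Nat.find hex by omega))
  have hOdir : ∀ i : Fin (n + 1), O.dir (σ i) (σ (i + 1)) = true := fun i => (hσS i).1
  -- construct the reversed orientation
  set P : V → V → Prop := fun x y =>
    (∃ i : Fin (n + 1), x = σ (i + 1) ∧ y = σ i) ∨
      (O.dir x y = true ∧ ¬ ∃ i : Fin (n + 1), x = σ i ∧ y = σ (i + 1)) with hPdef
  have hPadj : ∀ x y, P x y → G.Adj x y := by
    rintro x y (⟨i, rfl, rfl⟩ | ⟨hd, -⟩)
    · exact (O.adj_of_dir _ _ (hOdir i)).symm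
    · exact O.adj_of_dir x y hd
  have hPnb : ∀ x y, P x y → ¬ P y x := by
    rintro x y (⟨i, rfl, rfl⟩ | ⟨hd, hne'⟩) h'
    · rcases h' with ⟨i', he1, he2⟩ | ⟨hd', hne'⟩
      · -- he1 : σ i = σ (i' + 1), he2 : σ (i + 1) = σ i'
        have hd2 := hOdir i'
        rw [← he2, ← he1] at hd2
        have := dir_false_of_dir (hOdir i)
        rw [hd2] at this
        exact absurd this (by simp)
      · exact hne' ⟨i, rfl, rfl⟩
    · rcases h' with ⟨i', he1, he2⟩ | ⟨hd', -⟩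
      · exact hne' ⟨i', he2, he1⟩
      · have := dir_false_of_dir hd
        rw [hd'] at this
        exact absurd this (by simp)
  set O₁ := ofProp P hPadj hPnb with hO₁def
  have hchar : ∀ x y, (O₁.dir x y = true ↔ P x y) := fun x y => ofProp_dir ..
  have hcycrev : CycleReversal O O₁ := ⟨n, σ, hinj, hOdir, fun x y => by rw [hchar]⟩
  refine ⟨O₁, hcycrev, ?_, fun v => by rw [cycle_indeg hcycrev v]; exact hind v⟩
  -- Phi decreases
  have hp₀mem : ((σ (0 + 1), σ 0) : V × V) ∈ (Finset.univ : Finset (V × V)).filter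
      (fun p => Ot.dir p.1 p.2 = true ∧ O.dir p.1 p.2 = false) := by
    simp only [Finset.mem_filter, Finset.mem_univ, true_and]
    exact ⟨(hσS 0).2, dir_false_of_dir (hσS 0).1⟩
  have hsub : ((Finset.univ : Finset (V × V)).filter
      (fun p => Ot.dir p.1 p.2 = true ∧ O₁.dir p.1 p.2 = false)) ⊆
      (((Finset.univ : Finset (V × V)).filter
      (fun p => Ot.dir p.1 p.2 = true ∧ O.dir p.1 p.2 = false)).erase (σ (0 + 1), σ 0)) := by
    intro p hp
    simp only [Finset.mem_filter, Finset.mem_univ, true_and] at hp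
    obtain ⟨hp1, hp2⟩ := hp
    rw [Finset.mem_erase, Finset.mem_filter]
    constructor
    · intro hpe
      have : O₁.dir (σ (0 + 1)) (σ 0) = true := by
        rw [hchar]; exact Or.inl ⟨0, rfl, rfl⟩
      rw [hpe] at hp2
      simp only at hp2
      rw [this] at hp2
      exact absurd hp2 (by simp)
    · refine ⟨Finset.mem_univ _, hp1, ?_⟩
      rw [dir_ne_true_iff] at hp2 ⊢
      intro hOp
      apply hp2
      rw [hchar]
      by_cases hfwd : ∃ i : Fin (n + 1), p.1 = σ i ∧ p.2 = σ (i + 1)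
      · obtain ⟨i, he1, he2⟩ := hfwd
        -- then Ot.dir p.1 p.2 and Ot.dir p.2 p.1, contradiction
        exfalso
        have hOt2 : Ot.dir (σ (i + 1)) (σ i) = true := (hσS i).2
        have := dir_false_of_dir hOt2
        rw [← he1, ← he2] at this
        rw [this] at hp1
        exact absurd hp1 (by simp)
      · exact Or.inr ⟨hOp, hfwd⟩
  calc Phi Ot O₁ ≤ _ := Finset.card_le_card hsub
  _ < Phi Ot O := by
    rw [Finset.card_erase_of_mem hp₀mem]
    have : 0 < Phi Ot O := Finset.card_pos.2 ⟨_, hp₀mem⟩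
    rw [Phi] at this ⊢
    omega

end ClaimACycle

section ClaimAMain

lemma claimA_aux (Ot : PartialOrientation G) :
    ∀ (k : ℕ) (O : PartialOrientation G), Phi Ot O ≤ k → (∀ v, O.indeg v = Ot.indeg v) →
    Relation.ReflTransGen (fun A B => EdgePivot A B ∨ CycleReversal A B) O Ot := by
  intro k
  induction k with
  | zero =>
    intro O hk hind
    rw [eq_of_phi_zero hind (Nat.le_zero.mp hk)]
  | succ k ih =>
    intro O hk hind
    by_cases h0 : Phi Ot O = 0
    · rw [eq_of_phi_zero hind h0]
    · have hpos : 0 < Phi Ot O := Nat.pos_of_ne_zero h0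
      rw [Phi] at hpos
      obtain ⟨p, hp⟩ := Finset.card_pos.mp hpos
      simp only [Finset.mem_filter, Finset.mem_univ, true_and] at hp
      obtain ⟨hp1, hp2⟩ := hp
      by_cases hpiv : ∃ x y, Ot.dir x y = true ∧ O.dir x y = false ∧ O.dir y x = false
      · obtain ⟨x, y, h1, h2, h3⟩ := hpiv
        obtain ⟨O₁, hmove, hphi, hind₁⟩ := exists_pivot_step hind h1 h2 h3
        exact Relation.ReflTransGen.head (Or.inl hmove) (ih O₁ (by omega) hind₁)
      · push_neg at hpiv
        have hrev : ∀ x y, Ot.dir x y = true → O.dir x y = false → O.dir y x = true := by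
          intro x y hxy hOxy
          have := hpiv x y hxy hOxy
          cases hO : O.dir y x
          · exact absurd hO this
          · rfl
        have hseed : O.dir p.2 p.1 = true ∧ Ot.dir p.1 p.2 = true :=
          ⟨hrev p.1 p.2 hp1 hp2, hp1⟩
        obtain ⟨O₁, hmove, hphi, hind₁⟩ := exists_cycle_step hind hseed hrev
        exact Relation.ReflTransGen.head (Or.inr hmove) (ih O₁ (by omega) hind₁)

lemma claimA {Ot O : PartialOrientation G} (hind : ∀ v, O.indeg v = Ot.indeg v) :
    Relation.ReflTransGen (fun A B => EdgePivot A B ∨ CycleReversal A B) O Ot :=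
  claimA_aux Ot (Phi Ot O) O le_rfl hind

end ClaimAMain

end StmtAux

namespace StmtAux

open Finset PartialOrientation

variable {V : Type*} [Fintype V] [DecidableEq V] {G : SimpleGraph V} [DecidableRel G.Adj]

section Backward

/-- cut-degree of `v` w.r.t. a finite vertex set `A`. -/
def cutdegF (G : SimpleGraph V) [DecidableRel G.Adj] (A : Finset V) (v : V) : ℕ :=
  (Finset.univ.filter (fun u => G.Adj v u ∧ u ∉ A)).card

lemma cutdegF_anti {A B : Finset V} (hAB : A ⊆ B) (v : V) :
    cutdegF G B v ≤ cutdegF G A v := by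
  apply Finset.card_le_card
  intro u hu
  simp only [Finset.mem_filter, Finset.mem_univ, true_and] at hu ⊢
  exact ⟨hu.1, fun hA => hu.2 (hAB hA)⟩

/-- a good set: inside the support of `f`, and each member can keep its
in-degree while receiving all cut edges. -/
def goodSet (O : PartialOrientation G) (f : V → ℤ) (A : Finset V) : Prop :=
  (∀ v ∈ A, 0 < f v) ∧ ∀ v ∈ A, cutdegF G A v ≤ O.indeg v

open Classical in
/-- the union of all good sets. -/
noncomputable def Astar (O : PartialOrientation G) (f : V → ℤ) : Finset V :=
  Finset.univ.filter (fun v => ∃ A : Finset V, goodSet O f A ∧ v ∈ A)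

lemma subset_Astar {O : PartialOrientation G} {f : V → ℤ} {A : Finset V}
    (hA : goodSet O f A) : A ⊆ Astar O f := by
  intro v hv
  rw [Astar]
  simp only [Finset.mem_filter, Finset.mem_univ, true_and]
  exact ⟨A, hA, hv⟩

lemma Astar_good {O : PartialOrientation G} {f : V → ℤ} : goodSet O f (Astar O f) := by
  constructor
  · intro v hv
    rw [Astar] at hv
    simp only [Finset.mem_filter, Finset.mem_univ, true_and] at hv
    obtain ⟨A, hA, hvA⟩ := hv
    exact hA.1 v hvA
  · intro v hv
    have hv' := hv
    rw [Astar] at hv'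
    simp only [Finset.mem_filter, Finset.mem_univ, true_and] at hv'
    obtain ⟨A, hA, hvA⟩ := hv'
    exact le_trans (cutdegF_anti (subset_Astar hA) v) (hA.2 v hvA)

lemma Astar_max {O : PartialOrientation G} {f : V → ℤ} {B : Finset V}
    (hB1 : ∀ v ∈ B, 0 < f v) (hB2 : ∀ v ∈ B, v ∉ Astar O f) (hBne : B.Nonempty) :
    ∃ v ∈ B, O.indeg v < cutdegF G (Astar O f ∪ B) v := by
  by_contra hcon
  push_neg at hcon
  have hgood : goodSet O f (Astar O f ∪ B) := by
    constructor
    · intro v hv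
      rcases Finset.mem_union.1 hv with h | h
      · exact Astar_good.1 v h
      · exact hB1 v h
    · intro v hv
      rcases Finset.mem_union.1 hv with h | h
      · exact le_trans (cutdegF_anti Finset.subset_union_left v) (Astar_good.2 v h)
      · exact hcon v h
  obtain ⟨b, hb⟩ := hBne
  exact hB2 b hb (subset_Astar hgood (Finset.mem_union_right _ hb))

/-- the top-level set of `f` is a good set (given the Laplacian relation). -/
lemma top_good {O O'' : PartialOrientation G} {f : V → ℤ}
    (hlap : ∀ v, (O.indeg v : ℤ) - (O''.indeg v : ℤ) =
      ∑ u ∈ Finset.univ.filter (fun u => G.Adj v u), (f v - f u))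
    {M : ℤ} (hMmax : ∀ v, f v ≤ M) (hMpos : 0 < M) :
    goodSet O f (Finset.univ.filter (fun v => f v = M)) := by
  classical
  set T := Finset.univ.filter (fun v => f v = M) with hT
  have hmemT : ∀ v, v ∈ T ↔ f v = M := by
    intro v; rw [hT]; simp
  constructor
  · intro v hv
    rw [hmemT] at hv
    omega
  · intro v hv
    rw [hmemT] at hv
    have hsum : ∑ u ∈ Finset.univ.filter (fun u => G.Adj v u), (f v - f u) ≥
        ∑ u ∈ Finset.univ.filter (fun u => G.Adj v u), (if u ∈ T then (0:ℤ) else 1) := by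
      apply Finset.sum_le_sum
      intro u hu
      by_cases huT : u ∈ T
      · rw [if_pos huT]
        rw [hmemT] at huT
        omega
      · rw [if_neg huT]
        rw [hmemT] at huT
        have := hMmax u
        omega
    have hcount : ∑ u ∈ Finset.univ.filter (fun u => G.Adj v u),
        (if u ∈ T then (0:ℤ) else 1) = (cutdegF G T v : ℤ) := by
      have : ∀ u ∈ Finset.univ.filter (fun u => G.Adj v u),
          (if u ∈ T then (0:ℤ) else 1) = (if u ∉ T then (1:ℤ) else 0) := by
        intro u _
        by_cases h : u ∈ T <;> simp [h]
      rw [Finset.sum_congr rfl this, Finset.sum_boole]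
      have hset : (Finset.univ.filter (fun u => G.Adj v u)).filter (fun u => u ∉ T) =
          Finset.univ.filter (fun u => G.Adj v u ∧ u ∉ T) := by
        ext u; simp [Finset.mem_filter]
      rw [hset, cutdegF]
    have h1 := hlap v
    have h2 : (0:ℤ) ≤ (O''.indeg v : ℤ) := by positivity
    have : (cutdegF G T v : ℤ) ≤ (O.indeg v : ℤ) := by omega
    exact_mod_cast this

end Backward

end StmtAux

namespace StmtAux

open Finset PartialOrientation

variable {V : Type*} [Fintype V] [DecidableEq V] {G : SimpleGraph V} [DecidableRel G.Adj]

section BackwardW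

lemma Wlem {O : PartialOrientation G} {f : V → ℤ} :
    ∀ (m : ℕ) (B : Finset V), (∀ v ∈ B, 0 < f v ∧ v ∉ Astar O f) → B.card ≤ m →
    ∃ k : V → Finset V,
      (∀ v ∈ B, (k v).card = O.indeg v) ∧
      (∀ v ∈ B, ∀ x ∈ k v, G.Adj x v ∧ x ∉ Astar O f) ∧
      (∀ v ∈ B, ∀ x ∈ B, x ∈ k v → v ∉ k x) := by
  classical
  intro m
  induction m with
  | zero =>
    intro B hB hcard
    have : B = ∅ := Finset.card_eq_zero.mp (Nat.le_zero.mp hcard)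
    subst this
    exact ⟨fun _ => ∅, by simp, by simp, by simp⟩
  | succ m ih =>
    intro B hB hcard
    rcases B.eq_empty_or_nonempty with rfl | hne
    · exact ⟨fun _ => ∅, by simp, by simp, by simp⟩
    · obtain ⟨v, hvB, hvlt⟩ := Astar_max (fun w hw => (hB w hw).1) (fun w hw => (hB w hw).2) hne
      have hfil : cutdegF G (Astar O f ∪ B) v =
          (Finset.univ.filter (fun x => G.Adj v x ∧ ¬(x ∈ Astar O f ∨ x ∈ B))).card := by
        rw [cutdegF]
        congr 1
        ext x
        simp [Finset.mem_union]
      obtain ⟨Kv, hKsub, hKcard⟩ := Finset.exists_subset_card_eq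
        (s := Finset.univ.filter (fun x => G.Adj v x ∧ ¬(x ∈ Astar O f ∨ x ∈ B)))
        (n := O.indeg v) (by rw [← hfil]; omega)
      have hKv : ∀ x ∈ Kv, G.Adj v x ∧ x ∉ Astar O f ∧ x ∉ B := by
        intro x hx
        have := hKsub hx
        simp only [Finset.mem_filter, Finset.mem_univ, true_and] at this
        push_neg at this
        exact ⟨this.1, this.2.1, this.2.2⟩
      obtain ⟨k', hk1, hk2, hk3⟩ := ih (B.erase v)
        (fun w hw => hB w (Finset.mem_of_mem_erase hw))
        (by
          have := Finset.card_erase_of_mem hvB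
          omega)
      refine ⟨Function.update k' v Kv, ?_, ?_, ?_⟩
      · intro w hw
        rcases eq_or_ne w v with rfl | hwv
        · rw [Function.update_self]; exact hKcard
        · rw [Function.update_of_ne hwv]
          exact hk1 w (Finset.mem_erase.2 ⟨hwv, hw⟩)
      · intro w hw x hx
        rcases eq_or_ne w v with rfl | hwv
        · rw [Function.update_self] at hx
          exact ⟨(hKv x hx).1.symm, (hKv x hx).2.1⟩
        · rw [Function.update_of_ne hwv] at hx
          exact hk2 w (Finset.mem_erase.2 ⟨hwv, hw⟩) x hx
      · intro w hw x hx hxk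
        rcases eq_or_ne w v with rfl | hwv
        · -- x ∈ Kv but Kv avoids B
          rw [Function.update_self] at hxk
          exact absurd hx (hKv x hxk).2.2.elim
        · rcases eq_or_ne x v with rfl | hxv
          · rw [Function.update_self]
            intro hwK
            exact (hKv w hwK).2.2 hw
          · rw [Function.update_of_ne hxv]
            rw [Function.update_of_ne hwv] at hxk
            exact hk3 w (Finset.mem_erase.2 ⟨hwv, hw⟩) x (Finset.mem_erase.2 ⟨hxv, hx⟩) hxk

end BackwardW

end StmtAux

namespace StmtAux

open Finset PartialOrientation

variable {V : Type*} [Fintype V] [DecidableEq V] {G : SimpleGraph V} [DecidableRel G.Adj]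

section BuildTilde

lemma buildTilde {O O'' : PartialOrientation G} {f : V → ℤ}
    (hf0 : ∀ v, 0 ≤ f v)
    (hlap : ∀ v, (O.indeg v : ℤ) - (O''.indeg v : ℤ) =
      ∑ u ∈ Finset.univ.filter (fun u => G.Adj v u), (f v - f u))
    (hnz : ∃ v, 0 < f v) :
    ∃ (A : Finset V) (Ot : PartialOrientation G),
      A.Nonempty ∧ (∀ v ∈ A, 0 < f v) ∧
      (∀ v, Ot.indeg v = O.indeg v) ∧
      (∀ u v, G.Adj u v → u ∉ A → v ∈ A → Ot.dir u v = true) := by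
  classical
  obtain ⟨v₁, hv₁⟩ := hnz
  set A := Astar O f with hAdef
  have hA1 : ∀ v ∈ A, 0 < f v := Astar_good.1
  have hA2 : ∀ v ∈ A, cutdegF G A v ≤ O.indeg v := Astar_good.2
  -- A is nonempty via the top set
  have hAne : A.Nonempty := by
    have hine : (Finset.univ.image f).Nonempty :=
      ⟨f v₁, Finset.mem_image_of_mem f (Finset.mem_univ v₁)⟩
    set M := (Finset.univ.image f).max' hine with hM
    have hMmax : ∀ v, f v ≤ M :=
      fun v => Finset.le_max' _ _ (Finset.mem_image_of_mem f (Finset.mem_univ v))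
    have hMpos : 0 < M := lt_of_lt_of_le hv₁ (hMmax v₁)
    have hTgood := top_good hlap hMmax hMpos
    obtain ⟨y, hy⟩ := Finset.mem_image.1 ((Finset.univ.image f).max'_mem hine)
    have hyT : y ∈ Finset.univ.filter (fun v => f v = M) := by
      simp [hy.2, hM]
    exact ⟨y, subset_Astar hTgood hyT⟩
  -- the R-side choice function
  set R := Finset.univ.filter (fun v => 0 < f v ∧ v ∉ A) with hRdef
  obtain ⟨k, hk1, hk2, hk3⟩ := Wlem (O := O) (f := f) R.card R
    (fun w hw => by
      rw [hRdef] at hw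
      simpa using hw) le_rfl
  have hmemR : ∀ v, v ∈ R ↔ (0 < f v ∧ v ∉ A) := by
    intro v; rw [hRdef]; simp
  -- the Z-side choice function
  have hJ : ∀ v, ∃ J : Finset V, f v = 0 →
      ((∀ x ∈ J, O''.dir x v = true ∧ f x = 0) ∧ J.card = O.indeg v) := by
    intro v
    by_cases hfv : f v = 0
    · set Sz := Finset.univ.filter (fun x => O''.dir x v = true ∧ f x = 0) with hSz
      have hcard : O.indeg v ≤ Sz.card := by
        have hsplit := Finset.card_filter_add_card_filter_not
          (s := Nin O'' v) (p := fun x => f x = 0)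
        have hz : (Nin O'' v).filter (fun x => f x = 0) = Sz := by
          ext x
          simp only [Finset.mem_filter, mem_Nin, hSz, Finset.mem_univ, true_and]
        have hple : ((Nin O'' v).filter (fun x => ¬ f x = 0)).card ≤
            (Finset.univ.filter (fun u => G.Adj v u ∧ 0 < f u)).card := by
          apply Finset.card_le_card
          intro x hx
          simp only [Finset.mem_filter, mem_Nin, Finset.mem_univ, true_and] at hx ⊢
          have := hf0 x
          exact ⟨(O''.adj_of_dir x v hx.1).symm, by omega⟩
        have hsum : ((Finset.univ.filter (fun u => G.Adj v u ∧ 0 < f u)).card : ℤ) ≤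
            ∑ u ∈ Finset.univ.filter (fun u => G.Adj v u), f u := by
          have hpt : ∀ u ∈ Finset.univ.filter (fun u => G.Adj v u),
              (if 0 < f u then (1:ℤ) else 0) ≤ f u := by
            intro u _
            by_cases h : 0 < f u <;> simp [h]
            · omega
            · exact hf0 u
          calc ((Finset.univ.filter (fun u => G.Adj v u ∧ 0 < f u)).card : ℤ)
              = ∑ u ∈ Finset.univ.filter (fun u => G.Adj v u),
                  (if 0 < f u then (1:ℤ) else 0) := by
                rw [Finset.sum_boole]
                congr 1
                rw [Finset.filter_filter]
            _ ≤ _ := Finset.sum_le_sum hpt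
        have hlapv := hlap v
        have hlv : ∑ u ∈ Finset.univ.filter (fun u => G.Adj v u), (f v - f u) =
            - ∑ u ∈ Finset.univ.filter (fun u => G.Adj v u), f u := by
          rw [← Finset.sum_neg_distrib]
          apply Finset.sum_congr rfl
          intro u _
          rw [hfv]
          ring
        rw [hlv] at hlapv
        have h1 : (O.indeg v : ℤ) ≤ (Sz.card : ℤ) := by
          have hOcard : (O''.indeg v : ℤ) =
              (Sz.card : ℤ) + ((Nin O'' v).filter (fun x => ¬ f x = 0)).card := by
            rw [indeg_eq, ← hsplit, hz]
            push_cast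
            ring
          have c1 : (((Nin O'' v).filter (fun x => ¬ f x = 0)).card : ℤ) ≤
              ((Finset.univ.filter (fun u => G.Adj v u ∧ 0 < f u)).card : ℤ) := by
            exact_mod_cast hple
          omega
        exact_mod_cast h1
      obtain ⟨J, hJsub, hJcard⟩ := Finset.exists_subset_card_eq hcard
      refine ⟨J, fun _ => ⟨?_, hJcard⟩⟩
      intro x hx
      have := hJsub hx
      rw [hSz] at this
      simpa using this
    · exact ⟨∅, fun h => absurd h hfv⟩
  choose Jf hJf using hJ
  -- the A-side choice function
  have hI : ∀ v, ∃ I : Finset V, v ∈ A →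
      ((∀ x ∈ I, O.dir x v = true ∧ x ∈ A) ∧ I.card + cutdegF G A v = O.indeg v) := by
    intro v
    by_cases hvA : v ∈ A
    · set SIn := Finset.univ.filter (fun x => O.dir x v = true ∧ x ∈ A) with hSIn
      have hub : O.indeg v ≤ SIn.card + cutdegF G A v := by
        have hsplit := Finset.card_filter_add_card_filter_not
          (s := Nin O v) (p := fun x => x ∈ A)
        have he1 : (Nin O v).filter (fun x => x ∈ A) = SIn := by
          ext x
          simp only [Finset.mem_filter, mem_Nin, hSIn, Finset.mem_univ, true_and]
        have he2 : ((Nin O v).filter (fun x => ¬ x ∈ A)).card ≤ cutdegF G A v := by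
          apply Finset.card_le_card
          intro x hx
          simp only [Finset.mem_filter, mem_Nin, Finset.mem_univ, true_and, cutdegF] at hx ⊢
          exact ⟨(O.adj_of_dir x v hx.1).symm, hx.2⟩
        rw [he1] at hsplit
        rw [indeg_eq]
        omega
      have hcle : cutdegF G A v ≤ O.indeg v := hA2 v hvA
      obtain ⟨I, hIsub, hIcard⟩ := Finset.exists_subset_card_eq
        (s := SIn) (n := O.indeg v - cutdegF G A v) (by omega)
      refine ⟨I, fun _ => ⟨?_, by omega⟩⟩
      intro x hx
      have := hIsub hx
      rw [hSIn] at this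
      simpa using this
    · exact ⟨∅, fun h => absurd h hvA⟩
  choose If hIf using hI
  -- assemble the orientation
  set Pt : V → V → Prop := fun x v =>
    (v ∈ A ∧ x ∉ A ∧ G.Adj x v) ∨ (v ∈ A ∧ x ∈ A ∧ x ∈ If v) ∨
    (f v = 0 ∧ x ∈ Jf v) ∨ ((0 < f v ∧ v ∉ A) ∧ x ∈ k v) with hPt
  have hIprop : ∀ v, v ∈ A → ∀ x ∈ If v, O.dir x v = true ∧ x ∈ A :=
    fun v hv => (hIf v hv).1
  have hJprop : ∀ v, f v = 0 → ∀ x ∈ Jf v, O''.dir x v = true ∧ f x = 0 :=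
    fun v hv => (hJf v hv).1
  have hKprop : ∀ v, (0 < f v ∧ v ∉ A) → ∀ x ∈ k v, G.Adj x v ∧ x ∉ A :=
    fun v hv => hk2 v ((hmemR v).2 hv)
  have hPadj : ∀ x v, Pt x v → G.Adj x v := by
    rintro x v (⟨-, -, h⟩ | ⟨hvA, -, hx⟩ | ⟨hfv, hx⟩ | ⟨hvR, hx⟩)
    · exact h
    · exact O.adj_of_dir x v (hIprop v hvA x hx).1
    · exact O''.adj_of_dir x v (hJprop v hfv x hx).1
    · exact (hKprop v hvR x hx).1
  have hPnb : ∀ x v, Pt x v → ¬ Pt v x := by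
    rintro x v h h'
    rcases h with ⟨hvA, hxA, hadj⟩ | ⟨hvA, hxA, hx⟩ | ⟨hfv, hx⟩ | ⟨hvR, hx⟩
    · -- c1 : v ∈ A, x ∉ A
      rcases h' with ⟨hxA', -, -⟩ | ⟨hxA', -, -⟩ | ⟨hfx, hv'⟩ | ⟨hxR, hv'⟩
      · exact hxA hxA'
      · exact hxA hxA'
      · have := (hJprop x hfx v hv').2
        have := hA1 v hvA
        omega
      · exact (hKprop x hxR v hv').2 hvA
    · -- c2 : v ∈ A, x ∈ A, O.dir x v
      have hdxv := (hIprop v hvA x hx).1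
      rcases h' with ⟨-, hvA', -⟩ | ⟨hxA', -, hv'⟩ | ⟨hfx, -⟩ | ⟨hxR, -⟩
      · exact hvA' hvA
      · have hdvx := (hIprop x hxA' v hv').1
        have := dir_false_of_dir hdxv
        rw [hdvx] at this
        exact absurd this (by simp)
      · have := hA1 x hxA
        omega
      · exact hxR.2 hxA
    · -- c3 : f v = 0, x ∈ Jf v
      have hfx := (hJprop v hfv x hx).2
      have hdxv := (hJprop v hfv x hx).1
      rcases h' with ⟨hxA', -, -⟩ | ⟨hxA', -, -⟩ | ⟨hfx', hv'⟩ | ⟨hxR, hv'⟩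
      · have := hA1 x hxA'
        omega
      · have := hA1 x hxA'
        omega
      · have hdvx := (hJprop x hfx' v hv').1
        have := dir_false_of_dir hdxv
        rw [hdvx] at this
        exact absurd this (by simp)
      · have := (hKprop x hxR v hv').2
        -- gives v ∉ A ; need contradiction via f: hv' : v ∈ k x with hKprop x: only x.. 
        -- use hxR : 0 < f x, but hfx : f x = 0
        omega
    · -- c4 : 0 < f v, v ∉ A, x ∈ k v
      have hxA := (hKprop v hvR x hx).2
      rcases h' with ⟨hxA', -, -⟩ | ⟨hxA', -, -⟩ | ⟨hfx', hv'⟩ | ⟨hxR, hv'⟩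
      · exact hxA hxA'
      · exact hxA hxA'
      · have := (hJprop x hfx' v hv').2
        omega
      · exact hk3 v ((hmemR v).2 hvR) x ((hmemR x).2 hxR) hx hv'
  set Ot := ofProp Pt hPadj hPnb with hOt
  have hdirOt : ∀ x v, Ot.dir x v = true ↔ Pt x v := fun x v => ofProp_dir ..
  refine ⟨A, Ot, hAne, hA1, ?_, ?_⟩
  · -- indegrees agree
    intro v
    by_cases hvA : v ∈ A
    · have hNin : Nin Ot v =
          (Finset.univ.filter (fun x => G.Adj x v ∧ x ∉ A)) ∪ If v := by
        ext x
        simp only [mem_Nin, hdirOt, Finset.mem_union, Finset.mem_filter, Finset.mem_univ,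
          true_and]
        constructor
        · rintro (⟨-, hxA, hadj⟩ | ⟨-, -, hx⟩ | ⟨hfv, -⟩ | ⟨hvR, -⟩)
          · exact Or.inl ⟨hadj, hxA⟩
          · exact Or.inr hx
          · have := hA1 v hvA; omega
          · exact absurd hvA hvR.2
        · rintro (⟨hadj, hxA⟩ | hx)
          · exact Or.inl ⟨hvA, hxA, hadj⟩
          · exact Or.inr (Or.inl ⟨hvA, (hIprop v hvA x hx).2, hx⟩)
      have hdisj : Disjoint (Finset.univ.filter (fun x => G.Adj x v ∧ x ∉ A)) (If v) := by
        rw [Finset.disjoint_left]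
        intro x hx hx2
        exact (Finset.mem_filter.1 hx).2.2 ((hIprop v hvA x hx2).2)
      have hcuteq : (Finset.univ.filter (fun x => G.Adj x v ∧ x ∉ A)).card =
          cutdegF G A v := by
        rw [cutdegF]
        congr 1
        ext x
        simp [G.adj_comm]
      rw [indeg_eq, hNin, Finset.card_union_of_disjoint hdisj, hcuteq]
      have := (hIf v hvA).2
      omega
    · by_cases hfv : f v = 0
      · have hNin : Nin Ot v = Jf v := by
          ext x
          simp only [mem_Nin, hdirOt]
          constructor
          · rintro (⟨hvA', -, -⟩ | ⟨hvA', -, -⟩ | ⟨-, hx⟩ | ⟨hvR, -⟩)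
            · exact absurd hvA' hvA
            · exact absurd hvA' hvA
            · exact hx
            · omega
          · intro hx
            exact Or.inr (Or.inr (Or.inl ⟨hfv, hx⟩))
        rw [indeg_eq, hNin, (hJf v hfv).2]
      · have hvpos : 0 < f v := lt_of_le_of_ne (hf0 v) (Ne.symm hfv)
        have hNin : Nin Ot v = k v := by
          ext x
          simp only [mem_Nin, hdirOt]
          constructor
          · rintro (⟨hvA', -, -⟩ | ⟨hvA', -, -⟩ | ⟨hfv', -⟩ | ⟨-, hx⟩)
            · exact absurd hvA' hvA
            · exact absurd hvA' hvA
            · exact absurd hfv' hfv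
            · exact hx
          · intro hx
            exact Or.inr (Or.inr (Or.inr ⟨⟨hvpos, hvA⟩, hx⟩))
        rw [indeg_eq, hNin]
        exact hk1 v ((hmemR v).2 ⟨hvpos, hvA⟩)
  · -- all cut edges point into A
    intro u v hadj huA hvA
    rw [hdirOt]
    exact Or.inl ⟨hvA, huA, hadj⟩

end BuildTilde

end StmtAux

namespace StmtAux

open Finset PartialOrientation

variable {V : Type*} [Fintype V] [DecidableEq V] {G : SimpleGraph V} [DecidableRel G.Adj]

section Fire

lemma fire (Ot : PartialOrientation G) (A : Finset V)
    (hcut : ∀ u v, G.Adj u v → u ∉ A → v ∈ A → Ot.dir u v = true) :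
    ∃ Oh : PartialOrientation G, CocycleReversal Ot Oh ∧
      (∀ v ∈ A, Oh.indeg v + (Finset.univ.filter (fun u => G.Adj v u ∧ u ∉ A)).card
        = Ot.indeg v) ∧
      (∀ v, v ∉ A → Oh.indeg v = Ot.indeg v +
        (Finset.univ.filter (fun u => G.Adj v u ∧ u ∈ A)).card) := by
  classical
  set Ph : V → V → Prop := fun a b =>
    (a ∈ A ∧ b ∉ A ∧ Ot.dir b a = true) ∨ ((a ∈ A ↔ b ∈ A) ∧ Ot.dir a b = true) with hPh
  have hadj : ∀ a b, Ph a b → G.Adj a b := by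
    rintro a b (⟨-, -, h⟩ | ⟨-, h⟩)
    · exact (Ot.adj_of_dir b a h).symm
    · exact Ot.adj_of_dir a b h
  have hnb : ∀ a b, Ph a b → ¬ Ph b a := by
    rintro a b (⟨haA, hbA, hd⟩ | ⟨hiff, hd⟩) h'
    · rcases h' with ⟨hbA', -, -⟩ | ⟨hiff', -⟩
      · exact hbA hbA'
      · exact hbA (hiff'.2 haA)
    · rcases h' with ⟨hbA', haA', -⟩ | ⟨-, hd'⟩
      · exact haA' (hiff.2 hbA')
      · have := dir_false_of_dir hd
        rw [hd'] at this
        exact absurd this (by simp)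
  set Oh := ofProp Ph hadj hnb with hOh
  have hdir : ∀ a b, Oh.dir a b = true ↔ Ph a b := fun a b => ofProp_dir ..
  set S : Set V := {x | x ∈ A} with hS
  have hmemS : ∀ x, x ∈ S ↔ x ∈ A := fun x => Iff.rfl
  have hcut' : ∀ u v, G.Adj u v → u ∉ S → v ∈ S → Ot.dir u v = true := by
    intro u v h1 h2 h3
    exact hcut u v h1 (by rwa [← hmemS]) (by rwa [← hmemS])
  have hchar : ∀ a b, (Oh.dir a b = true ↔
      ((a ∈ S ∧ b ∉ S ∧ Ot.dir b a = true) ∨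
        ((a ∈ S ↔ b ∈ S) ∧ Ot.dir a b = true))) := by
    intro a b
    rw [hdir]
    exact Iff.rfl
  have hcoc : CocycleReversal Ot Oh := ⟨S, hcut', hchar⟩
  refine ⟨Oh, hcoc, ?_, ?_⟩
  · intro v hv
    have := cocycle_indeg_mem hcut' hchar ((hmemS v).2 hv)
    have hcutdeg : cutdegS G S v = (Finset.univ.filter (fun u => G.Adj v u ∧ u ∉ A)).card := by
      rw [cutdegS]
      congr 1
      ext u
      simp [hmemS]
    omega
  · intro v hv
    have := cocycle_indeg_not_mem hcut' hchar (by rw [hmemS]; exact hv)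
    have hindegS : indegS G S v = (Finset.univ.filter (fun u => G.Adj v u ∧ u ∈ A)).card := by
      rw [indegS]
      congr 1
      ext u
      simp [hmemS]
    omega

end Fire

section MainInduction

lemma equal_case {O O'' : PartialOrientation G} (h : ∀ v, O.indeg v = O''.indeg v) :
    GenCycleCocycleEquiv O O'' :=
  Relation.ReflTransGen.mono
    (fun _ _ hab => hab.elim Or.inl (fun hc => Or.inr (Or.inl hc))) _ _ (claimA h)

lemma backward_main : ∀ (N : ℕ) (O O'' : PartialOrientation G) (f : V → ℤ),
    (∀ v, 0 ≤ f v) → ((∑ v, f v).toNat ≤ N) →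
    (∀ v, (O.indeg v : ℤ) - (O''.indeg v : ℤ) =
      ∑ u ∈ Finset.univ.filter (fun u => G.Adj v u), (f v - f u)) →
    GenCycleCocycleEquiv O O'' := by
  classical
  intro N
  induction N with
  | zero =>
    intro O O'' f hf0 hN hlap
    have hsumnn : (0:ℤ) ≤ ∑ v, f v := Finset.sum_nonneg (fun v _ => hf0 v)
    have hsum0 : ∑ v, f v = 0 := by omega
    have hall : ∀ v, f v = 0 := by
      intro v
      have := (Finset.sum_eq_zero_iff_of_nonneg (fun v _ => hf0 v)).1 hsum0
      exact this v (Finset.mem_univ v)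
    apply equal_case
    intro v
    have := hlap v
    rw [Finset.sum_eq_zero (fun u _ => by rw [hall v, hall u]; ring)] at this
    omega
  | succ N ih =>
    intro O O'' f hf0 hN hlap
    by_cases hall : ∀ v, f v = 0
    · apply equal_case
      intro v
      have := hlap v
      rw [Finset.sum_eq_zero (fun u _ => by rw [hall v, hall u]; ring)] at this
      omega
    · push_neg at hall
      obtain ⟨v₁, hv₁⟩ := hall
      have hnz : ∃ v, 0 < f v := ⟨v₁, lt_of_le_of_ne (hf0 v₁) (Ne.symm hv₁)⟩
      obtain ⟨A, Ot, hAne, hApos, hOtind, hOtcut⟩ := buildTilde hf0 hlap hnz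
      obtain ⟨Oh, hcoc, hOhA, hOhnA⟩ := fire Ot A hOtcut
      set f₁ : V → ℤ := fun v => if v ∈ A then f v - 1 else f v with hf₁def
      have hχ : ∀ w, f₁ w = f w - (if w ∈ A then (1:ℤ) else 0) := by
        intro w
        by_cases h : w ∈ A <;> simp [hf₁def, h]
      have hf₁0 : ∀ v, 0 ≤ f₁ v := by
        intro v
        by_cases h : v ∈ A
        · have := hApos v h
          simp [hf₁def, h]
          omega
        · simp [hf₁def, h]
          exact hf0 v
      -- the chi-sum identities
      have hχsum : ∀ v, ∑ u ∈ Finset.univ.filter (fun u => G.Adj v u),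
          ((if v ∈ A then (1:ℤ) else 0) - (if u ∈ A then (1:ℤ) else 0)) =
          (if v ∈ A then ((Finset.univ.filter (fun u => G.Adj v u ∧ u ∉ A)).card : ℤ)
            else -((Finset.univ.filter (fun u => G.Adj v u ∧ u ∈ A)).card : ℤ)) := by
        intro v
        by_cases hv : v ∈ A
        · have hpt : ∀ u ∈ Finset.univ.filter (fun u => G.Adj v u),
              ((if v ∈ A then (1:ℤ) else 0) - (if u ∈ A then (1:ℤ) else 0)) =
              (if u ∉ A then (1:ℤ) else 0) := by
            intro u _
            by_cases hu : u ∈ A <;> simp [hv, hu]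
          rw [Finset.sum_congr rfl hpt, Finset.sum_boole, if_pos hv]
          congr 1
          rw [Finset.filter_filter]
        · have hpt : ∀ u ∈ Finset.univ.filter (fun u => G.Adj v u),
              ((if v ∈ A then (1:ℤ) else 0) - (if u ∈ A then (1:ℤ) else 0)) =
              -(if u ∈ A then (1:ℤ) else 0) := by
            intro u _
            by_cases hu : u ∈ A <;> simp [hv, hu]
          rw [Finset.sum_congr rfl hpt, Finset.sum_neg_distrib, Finset.sum_boole, if_neg hv]
          congr 2
          rw [Finset.filter_filter]
      have hlap₁ : ∀ v, (Oh.indeg v : ℤ) - (O''.indeg v : ℤ) =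
          ∑ u ∈ Finset.univ.filter (fun u => G.Adj v u), (f₁ v - f₁ u) := by
        intro v
        have hsplit : ∑ u ∈ Finset.univ.filter (fun u => G.Adj v u), (f₁ v - f₁ u) =
            (∑ u ∈ Finset.univ.filter (fun u => G.Adj v u), (f v - f u)) -
            ∑ u ∈ Finset.univ.filter (fun u => G.Adj v u),
              ((if v ∈ A then (1:ℤ) else 0) - (if u ∈ A then (1:ℤ) else 0)) := by
          rw [← Finset.sum_sub_distrib]
          apply Finset.sum_congr rfl
          intro u _
          rw [hχ v, hχ u]
          ring
        rw [hsplit, hχsum v, ← hlap v]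
        by_cases hv : v ∈ A
        · have h1 := hOhA v hv
          have h2 := hOtind v
          rw [if_pos hv]
          push_cast
          omega
        · have h1 := hOhnA v hv
          have h2 := hOtind v
          rw [if_neg hv]
          push_cast
          omega
      have hmeas : (∑ v, f₁ v).toNat ≤ N := by
        have hsum : ∑ v, f₁ v = (∑ v, f v) - A.card := by
          have : ∑ v, f₁ v = ∑ v, (f v - (if v ∈ A then (1:ℤ) else 0)) :=
            Finset.sum_congr rfl (fun v _ => hχ v)
          rw [this, Finset.sum_sub_distrib]
          congr 1
          rw [Finset.sum_boole]
          have : Finset.univ.filter (fun v => v ∈ A) = A := by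
            ext v; simp
          rw [this]
        have hnn1 : (0:ℤ) ≤ ∑ v, f₁ v := Finset.sum_nonneg (fun v _ => hf₁0 v)
        have hnn : (0:ℤ) ≤ ∑ v, f v := Finset.sum_nonneg (fun v _ => hf0 v)
        have hcard : 0 < A.card := Finset.card_pos.2 hAne
        omega
      have hmoves1 : Relation.ReflTransGen
          (fun X Y : PartialOrientation G => EdgePivot X Y ∨ CycleReversal X Y) O Ot :=
        claimA (fun v => (hOtind v).symm)
      have hstep1 : GenCycleCocycleEquiv O Ot :=
        Relation.ReflTransGen.mono
          (fun _ _ hab => hab.elim Or.inl (fun hc => Or.inr (Or.inl hc))) _ _ hmoves1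
      have hrest : GenCycleCocycleEquiv Oh O'' := ih Oh O'' f₁ hf₁0 hmeas hlap₁
      exact Relation.ReflTransGen.trans hstep1
        (Relation.ReflTransGen.head (Or.inr (Or.inr hcoc)) hrest)

end MainInduction

end StmtAux


/-- Two partial orientations are equivalent in the generalized
cycle-cocycle reversal system iff their associated divisors are linearly equivalent. -/
theorem stmt2 {V : Type*} [Fintype V] [DecidableEq V] (G : SimpleGraph V)
    [DecidableRel G.Adj] (hG : G.Connected)
    (O O' : PartialOrientation G) :
    PartialOrientation.GenCycleCocycleEquiv O O' ↔ LinEquiv G O.div O'.div := by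
    classical
  constructor
  · exact StmtAux.forward_dir
  · rintro ⟨f₀, hf₀⟩
    have hVne : Nonempty V := hG.nonempty
    obtain ⟨w⟩ := hVne
    have hine : (Finset.univ.image f₀).Nonempty :=
      ⟨f₀ w, Finset.mem_image_of_mem f₀ (Finset.mem_univ w)⟩
    set c := (Finset.univ.image f₀).min' hine with hc
    set f : V → ℤ := fun v => f₀ v - c with hfdef
    have hf0 : ∀ v, 0 ≤ f v := by
      intro v
      have := Finset.min'_le (Finset.univ.image f₀) (f₀ v)
        (Finset.mem_image_of_mem f₀ (Finset.mem_univ v))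
      simp only [hfdef]
      omega
    have hlap : ∀ v, (O.indeg v : ℤ) - (O'.indeg v : ℤ) =
        ∑ u ∈ Finset.univ.filter (fun u => G.Adj v u), (f v - f u) := by
      intro v
      have h1 := hf₀ v
      rw [StmtAux.div_sub_div] at h1
      rw [h1]
      apply Finset.sum_congr rfl
      intro u _
      simp only [hfdef]
      ring
    exact StmtAux.backward_main (∑ v, f v).toNat O O' f hf0 le_rfl hlap
end

section
/- Let G be a finite connected simple graph, q a vertex of G, and D a divisor on G with D(q) = −1. Then D is q-reduced if and only if D = D_O for some q-connected acyclic partial orientation O of G. -/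
open Finset in
lemma stmt4_backward {V : Type*} [Fintype V] [DecidableEq V] (G : SimpleGraph V)
    [DecidableRel G.Adj] (q : V) (O : PartialOrientation G)
    (hQ : O.QConnected q) (hA : O.Acyclic) : QReduced G q O.div := by
  constructor
  · intro v hv
    rcases (hQ v).cases_tail with h1 | ⟨u, _, hu⟩
    · exact absurd h1 hv
    · have hmem : u ∈ Finset.univ.filter (fun w => O.dir w v = true) := by simp [hu]
      have hc := Finset.card_pos.mpr ⟨u, hmem⟩
      unfold PartialOrientation.div PartialOrientation.indeg
      omega
  · intro A hne hqA
    set r : V → V → Prop := fun a b => a ∈ A ∧ O.dir a b = true with hr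
    have hirr : IsIrrefl V (Relation.TransGen r) :=
      ⟨fun a ha => hA a (Relation.TransGen.mono (fun x y h => h.2) _ _ ha)⟩
    have htr : IsTrans V (Relation.TransGen r) := inferInstance
    have hwf : WellFounded r :=
      Subrelation.wf (fun h => Relation.TransGen.single h)
        (Finite.wellFounded_of_trans_of_irrefl _)
    obtain ⟨v, hvA, hmin⟩ := hwf.has_min (↑A : Set V) (Finset.coe_nonempty.2 hne)
    rw [Finset.mem_coe] at hvA
    refine ⟨v, hvA, ?_⟩
    have hsub : Finset.univ.filter (fun u => O.dir u v = true) ⊆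
        Finset.univ.filter (fun u => G.Adj v u ∧ u ∉ A) := by
      intro u hu
      simp only [Finset.mem_filter, Finset.mem_univ, true_and] at hu ⊢
      exact ⟨(O.adj_of_dir u v hu).symm, fun huA => hmin u huA ⟨huA, hu⟩⟩
    have hcle := Finset.card_le_card hsub
    unfold PartialOrientation.div PartialOrientation.indeg outdegOf
    omega

open Finset in
lemma stmt4_forward {V : Type*} [Fintype V] [DecidableEq V] (G : SimpleGraph V)
    [DecidableRel G.Adj] (q : V) (D : V → ℤ) (hq : D q = -1) (h : QReduced G q D) :
    ∃ O : PartialOrientation G, O.QConnected q ∧ O.Acyclic ∧ D = O.div := by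
  classical
  obtain ⟨h0, h1⟩ := h
  -- choice of next vertex to burn
  have key : ∀ B : Finset V, ∃ v, q ∈ B → Bᶜ.Nonempty →
      v ∉ B ∧ D v < ((Finset.univ.filter (fun u => G.Adj v u ∧ u ∈ B)).card : ℤ) := by
    intro B
    by_cases hc : q ∈ B ∧ Bᶜ.Nonempty
    · obtain ⟨v, hv, hlt⟩ := h1 Bᶜ hc.2 (by simp [hc.1])
      refine ⟨v, fun _ _ => ⟨Finset.mem_compl.mp hv, ?_⟩⟩
      have heq : outdegOf G Bᶜ v = (Finset.univ.filter (fun u => G.Adj v u ∧ u ∈ B)).card := by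
        unfold outdegOf; congr 1; ext u; simp
      rw [heq] at hlt; omega
    · exact ⟨q, fun h1 h2 => absurd ⟨h1, h2⟩ hc⟩
  choose nxt hnxt using key
  set Bs : ℕ → Finset V := fun k => Nat.rec {q} (fun _ B => insert (nxt B) B) k with hBs
  have hB0 : Bs 0 = {q} := rfl
  have hBsucc : ∀ k, Bs (k + 1) = insert (nxt (Bs k)) (Bs k) := fun k => rfl
  have hqB : ∀ k, q ∈ Bs k := by
    intro k; induction k with
    | zero => simp [hB0]
    | succ k ih => rw [hBsucc]; exact Finset.mem_insert_of_mem ih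
  have hmono : Monotone Bs := by
    apply monotone_nat_of_le_succ
    intro k; rw [hBsucc]; exact Finset.subset_insert _ _
  have hcard : ∀ k, k + 1 ≤ (Bs k).card ∨ Bs k = Finset.univ := by
    intro k; induction k with
    | zero => left; simp [hB0]
    | succ k ih =>
      rcases ih with ih | ih
      · by_cases hne : (Bs k)ᶜ.Nonempty
        · left
          have hnot : nxt (Bs k) ∉ Bs k := (hnxt (Bs k) (hqB k) hne).1
          rw [hBsucc, Finset.card_insert_of_notMem hnot]; omega
        · right
          rw [Finset.not_nonempty_iff_eq_empty, Finset.compl_eq_empty_iff] at hne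
          rw [hBsucc, hne]; simp [hne]
      · right; rw [hBsucc, ih]; simp
  have hex : ∀ v : V, ∃ k, v ∈ Bs k := by
    intro v
    refine ⟨Fintype.card V, ?_⟩
    rcases hcard (Fintype.card V) with hc | hc
    · have := Finset.card_le_univ (Bs (Fintype.card V))
      omega
    · rw [hc]; exact Finset.mem_univ v
  set ord : V → ℕ := fun v => Nat.find (hex v) with hord
  have hmemord : ∀ v, v ∈ Bs (ord v) := fun v => Nat.find_spec (hex v)
  have hnotmem : ∀ v j, j < ord v → v ∉ Bs j := fun v j hj => Nat.find_min (hex v) hj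
  have hordle : ∀ v k, v ∈ Bs k → ord v ≤ k := fun v k hk => Nat.find_le hk
  have hordq : ∀ v, ord v = 0 → v = q := by
    intro v hv
    have := hmemord v
    rw [hv, hB0, Finset.mem_singleton] at this; exact this
  -- earlier neighbors
  set E : V → Finset V := fun v => Finset.univ.filter (fun u => G.Adj u v ∧ ord u < ord v)
    with hE
  have hElarge : ∀ v, (D v + 1).toNat ≤ (E v).card := by
    intro v
    by_cases hvq : v = q
    · subst hvq; rw [hq]; simp
    · have hvpos : 0 < ord v := by
        rcases Nat.eq_zero_or_pos (ord v) with h | h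
        · exact absurd (hordq v h) hvq
        · exact h
      obtain ⟨m, hm⟩ : ∃ m, ord v = m + 1 := ⟨ord v - 1, by omega⟩
      have hvmem := hmemord v
      rw [hm, hBsucc] at hvmem
      have hvnot : v ∉ Bs m := hnotmem v m (by omega)
      have hveq : v = nxt (Bs m) := by
        rcases Finset.mem_insert.mp hvmem with h | h
        · exact h
        · exact absurd h hvnot
      have hne : (Bs m)ᶜ.Nonempty := ⟨v, Finset.mem_compl.mpr hvnot⟩
      have hspec := (hnxt (Bs m) (hqB m) hne).2
      rw [← hveq] at hspec
      have hsub : Finset.univ.filter (fun u => G.Adj v u ∧ u ∈ Bs m) ⊆ E v := by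
        intro u hu
        simp only [Finset.mem_filter, Finset.mem_univ, true_and, hE] at hu ⊢
        refine ⟨hu.1.symm, ?_⟩
        have := hordle u m hu.2
        omega
      have := Finset.card_le_card hsub
      have hDv := h0 v hvq
      omega
  have hchoose : ∀ v, ∃ s ⊆ E v, s.card = (D v + 1).toNat :=
    fun v => Finset.exists_subset_card_eq (hElarge v)
  choose f hf hfcard using hchoose
  have hfE : ∀ v u, u ∈ f v → G.Adj u v ∧ ord u < ord v := by
    intro v u hu
    have := hf v hu
    simpa [hE] using this
  refine ⟨⟨fun u v => decide (u ∈ f v), ?_, ?_⟩, ?_, ?_, ?_⟩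
  · intro u v hd
    exact (hfE v u (by simpa using hd)).1
  · intro u v hd
    have h1 := (hfE v u (by simpa using hd)).2
    by_contra hc
    rw [Bool.not_eq_false] at hc
    have h2 := (hfE u v (by simpa using hc)).2
    omega
  · -- QConnected
    have hstep : ∀ a b : V, decide (a ∈ f b) = true → ord a < ord b := by
      intro a b hd
      exact (hfE b a (by simpa using hd)).2
    intro v
    have : ∀ n, ∀ w : V, ord w = n →
        Relation.ReflTransGen (fun a b => decide (a ∈ f b) = true) q w := by
      intro n
      induction n using Nat.strong_induction_on with
      | _ n ih =>
        intro w hw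
        by_cases hwq : w = q
        · subst hwq; exact Relation.ReflTransGen.refl
        · have hpos : 0 < (f w).card := by
            rw [hfcard]
            have := h0 w hwq
            omega
          obtain ⟨u, hu⟩ := Finset.card_pos.mp hpos
          have huw := hfE w u hu
          have := ih (ord u) (by omega) u rfl
          exact this.tail (by simpa using hu)
    exact this (ord v) v rfl
  · -- Acyclic
    intro v hv
    have hmono' : ∀ a b : V, Relation.TransGen (fun a b => decide (a ∈ f b) = true) a b →
        ord a < ord b := by
      intro a b hab
      induction hab with
      | single h => exact (hfE _ _ (by simpa using h)).2
      | tail _ h ih => exact ih.trans (hfE _ _ (by simpa using h)).2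
    exact absurd (hmono' v v hv) (lt_irrefl _)
  · -- D = O.div
    funext v
    have hind : (Finset.univ.filter (fun u => decide (u ∈ f v) = true)) = f v := by
      ext u; simp
    show D v = _
    unfold PartialOrientation.div PartialOrientation.indeg
    simp only [hind, hfcard]
    by_cases hvq : v = q
    · subst hvq; rw [hq]; simp
    · have := h0 v hvq; omega

/-- A divisor `D` with `D q = -1` is `q`-reduced iff `D = D_O` for
some `q`-connected acyclic partial orientation `O`. -/
theorem stmt4 {V : Type*} [Fintype V] [DecidableEq V] (G : SimpleGraph V)
    [DecidableRel G.Adj] (hG : G.Connected)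
    (q : V) (D : V → ℤ) (hq : D q = -1) :
    QReduced G q D ↔
      ∃ O : PartialOrientation G, O.QConnected q ∧ O.Acyclic ∧ D = O.div := by
  constructor
  · exact stmt4_forward G q D hq
  · rintro ⟨O, hQ, hA, rfl⟩
    exact stmt4_backward G q O hQ hA
end

section
/- In a finite connected simple graph G, a sourceless partial orientation O and an acyclic partial orientation O' can never be equivalent in the generalized cocycle reversal system (i.e., O' cannot be obtained from O by any finite sequence of edge pivots and cocycle reversals). -/
section Aux

open Finset

variable {V : Type*} {G : SimpleGraph V}

lemma linEquiv_refl [Fintype V] [DecidableRel G.Adj] (D : V → ℤ) : LinEquiv G D D :=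
  ⟨0, fun v => by simp⟩

lemma linEquiv_trans [Fintype V] [DecidableRel G.Adj] {D₁ D₂ D₃ : V → ℤ}
    (h₁ : LinEquiv G D₁ D₂) (h₂ : LinEquiv G D₂ D₃) : LinEquiv G D₁ D₃ := by
  obtain ⟨f, hf⟩ := h₁
  obtain ⟨g, hg⟩ := h₂
  refine ⟨f + g, fun v => ?_⟩
  have := hf v
  have := hg v
  have hsum : ∑ u ∈ Finset.univ.filter (fun u => G.Adj v u), ((f + g) v - (f + g) u)
      = (∑ u ∈ Finset.univ.filter (fun u => G.Adj v u), (f v - f u))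
        + ∑ u ∈ Finset.univ.filter (fun u => G.Adj v u), (g v - g u) := by
    rw [← Finset.sum_add_distrib]
    exact Finset.sum_congr rfl (fun u _ => by simp [Pi.add_apply]; ring)
  rw [hsum]; omega

/-- Edge pivots preserve all indegrees. -/
lemma indeg_eq_of_edgePivot [Fintype V] [DecidableEq V] {O O' : PartialOrientation G}
    (h : PartialOrientation.EdgePivot O O') (b : V) : O'.indeg b = O.indeg b := by
  obtain ⟨v, u, w, huv, hadj, hwv, hvw, hiff⟩ := h
  unfold PartialOrientation.indeg
  by_cases hb : b = v
  · subst hb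
    have hset : Finset.univ.filter (fun a => O'.dir a b = true)
        = insert w ((Finset.univ.filter (fun a => O.dir a b = true)).erase u) := by
      ext a
      simp only [Finset.mem_filter, Finset.mem_univ, true_and, Finset.mem_insert,
        Finset.mem_erase, hiff]
      tauto
    have hu : u ∈ Finset.univ.filter (fun a => O.dir a b = true) := by
      simp [huv]
    have hw : w ∉ (Finset.univ.filter (fun a => O.dir a b = true)).erase u := by
      simp [hwv]
    rw [hset, Finset.card_insert_of_notMem hw, Finset.card_erase_of_mem hu]
    have := Finset.card_pos.mpr ⟨u, hu⟩
    omega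
  · congr 1
    ext a
    simp only [Finset.mem_filter, Finset.mem_univ, true_and, hiff]
    constructor
    · rintro (⟨-, rfl⟩ | ⟨hd, -⟩)
      · exact absurd rfl hb
      · exact hd
    · intro hd
      exact Or.inr ⟨hd, fun h' => hb h'.2⟩

/-- Cocycle reversals change the divisor by a Laplacian firing. -/
lemma linEquiv_of_cocycleReversal [Fintype V] [DecidableEq V] [DecidableRel G.Adj]
    {O O' : PartialOrientation G} (h : PartialOrientation.CocycleReversal O O') :
    LinEquiv G O.div O'.div := by
  classical
  obtain ⟨S, hcut, hiff⟩ := h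
  refine ⟨fun v => if v ∈ S then 1 else 0, fun v => ?_⟩
  unfold PartialOrientation.div
  by_cases hv : v ∈ S
  · -- v ∈ S : indeg v - indeg' v = #(neighbors outside S)
    have hRHS : ∑ u ∈ Finset.univ.filter (fun u => G.Adj v u),
        ((if v ∈ S then (1:ℤ) else 0) - (if u ∈ S then 1 else 0))
        = ((Finset.univ.filter (fun u => G.Adj v u ∧ u ∉ S)).card : ℤ) := by
      rw [show (Finset.univ.filter (fun u => G.Adj v u ∧ u ∉ S))
          = (Finset.univ.filter (fun u => G.Adj v u)).filter (fun u => u ∉ S) by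
        rw [Finset.filter_filter]]
      rw [← Finset.sum_boole]
      refine Finset.sum_congr rfl (fun u _ => ?_)
      by_cases hu : u ∈ S <;> simp [hv, hu]
    rw [hRHS]
    -- indeg' computation
    have hset' : Finset.univ.filter (fun a => O'.dir a v = true)
        = (Finset.univ.filter (fun a => O.dir a v = true)).filter (fun a => a ∈ S) := by
      ext a
      simp only [Finset.mem_filter, Finset.mem_univ, true_and, hiff]
      constructor
      · rintro (⟨-, hv', -⟩ | ⟨hmem, hd⟩)
        · exact absurd hv hv'
        · exact ⟨hd, hmem.mpr hv⟩
      · rintro ⟨hd, ha⟩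
        exact Or.inr ⟨iff_of_true ha hv, hd⟩
    have hsplit : O.indeg v =
        ((Finset.univ.filter (fun a => O.dir a v = true)).filter (fun a => a ∈ S)).card
        + ((Finset.univ.filter (fun a => O.dir a v = true)).filter (fun a => a ∉ S)).card := by
      unfold PartialOrientation.indeg
      rw [Finset.card_filter_add_card_filter_not]
    have houtside : (Finset.univ.filter (fun a => O.dir a v = true)).filter (fun a => a ∉ S)
        = Finset.univ.filter (fun u => G.Adj v u ∧ u ∉ S) := by
      ext a
      simp only [Finset.mem_filter, Finset.mem_univ, true_and]
      constructor
      · rintro ⟨hd, ha⟩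
        exact ⟨(O.adj_of_dir a v hd).symm, ha⟩
      · rintro ⟨hadj, ha⟩
        exact ⟨hcut a v hadj.symm ha hv, ha⟩
    have hindeg' : O'.indeg v =
        ((Finset.univ.filter (fun a => O.dir a v = true)).filter (fun a => a ∈ S)).card := by
      unfold PartialOrientation.indeg
      rw [hset']
    rw [← hindeg', houtside] at hsplit
    omega
  · -- v ∉ S : indeg' v = indeg v + #(neighbors in S)
    have hRHS : ∑ u ∈ Finset.univ.filter (fun u => G.Adj v u),
        ((if v ∈ S then (1:ℤ) else 0) - (if u ∈ S then 1 else 0))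
        = -((Finset.univ.filter (fun u => G.Adj v u ∧ u ∈ S)).card : ℤ) := by
      rw [show (Finset.univ.filter (fun u => G.Adj v u ∧ u ∈ S))
          = (Finset.univ.filter (fun u => G.Adj v u)).filter (fun u => u ∈ S) by
        rw [Finset.filter_filter]]
      rw [← Finset.sum_boole, ← Finset.sum_neg_distrib]
      refine Finset.sum_congr rfl (fun u _ => ?_)
      by_cases hu : u ∈ S <;> simp [hv, hu]
    rw [hRHS]
    -- old incoming edges of v all come from outside S
    have hold : Finset.univ.filter (fun a => O.dir a v = true)
        = Finset.univ.filter (fun a => a ∉ S ∧ O.dir a v = true) := by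
      ext a
      simp only [Finset.mem_filter, Finset.mem_univ, true_and]
      refine ⟨fun hd => ⟨fun ha => ?_, hd⟩, fun h => h.2⟩
      have hadj : G.Adj v a := (O.adj_of_dir a v hd).symm
      have h2 := O.not_both v a (hcut v a hadj hv ha)
      simp [hd] at h2
    have hnew : Finset.univ.filter (fun a => O'.dir a v = true)
        = Finset.univ.filter (fun a => a ∈ S ∧ G.Adj v a)
          ∪ Finset.univ.filter (fun a => a ∉ S ∧ O.dir a v = true) := by
      ext a
      simp only [Finset.mem_filter, Finset.mem_univ, true_and, Finset.mem_union, hiff]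
      constructor
      · rintro (⟨ha, -, hd⟩ | ⟨hmem, hd⟩)
        · exact Or.inl ⟨ha, O.adj_of_dir v a hd⟩
        · have ha : a ∉ S := fun h' => hv (hmem.mp h')
          exact Or.inr ⟨ha, hd⟩
      · rintro (⟨ha, hadj⟩ | ⟨ha, hd⟩)
        · exact Or.inl ⟨ha, hv, hcut v a hadj hv ha⟩
        · exact Or.inr ⟨iff_of_false ha hv, hd⟩
    have hdisj : Disjoint (Finset.univ.filter (fun a => a ∈ S ∧ G.Adj v a))
        (Finset.univ.filter (fun a => a ∉ S ∧ O.dir a v = true)) := by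
      rw [Finset.disjoint_left]
      intro a ha hb
      simp only [Finset.mem_filter] at ha hb
      exact hb.2.1 ha.2.1
    have hcardnew : O'.indeg v = (Finset.univ.filter (fun a => a ∈ S ∧ G.Adj v a)).card
        + (Finset.univ.filter (fun a => a ∉ S ∧ O.dir a v = true)).card := by
      unfold PartialOrientation.indeg
      rw [hnew, Finset.card_union_of_disjoint hdisj]
    have hcardold : O.indeg v
        = (Finset.univ.filter (fun a => a ∉ S ∧ O.dir a v = true)).card := by
      unfold PartialOrientation.indeg
      rw [hold]
    have hSneighbors : (Finset.univ.filter (fun a => a ∈ S ∧ G.Adj v a))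
        = Finset.univ.filter (fun u => G.Adj v u ∧ u ∈ S) := by
      ext a; simp [and_comm]
    rw [hSneighbors] at hcardnew
    omega

/-- The divisor class is invariant along the generalized cocycle reversal system. -/
lemma linEquiv_of_genCocycleEquiv [Fintype V] [DecidableEq V] [DecidableRel G.Adj]
    {O O' : PartialOrientation G} (h : PartialOrientation.GenCocycleEquiv O O') :
    LinEquiv G O.div O'.div := by
  induction h with
  | refl => exact linEquiv_refl _
  | tail _ hstep ih =>
      refine linEquiv_trans ih ?_
      rcases hstep with hp | hc
      · refine ⟨0, fun v => ?_⟩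
        have := indeg_eq_of_edgePivot hp v
        simp [PartialOrientation.div, this]
      · exact linEquiv_of_cocycleReversal hc

end Aux

/-- A sourceless partial orientation and an acyclic partial
orientation are never equivalent in the generalized cocycle reversal system. -/
theorem stmt5 {V : Type*} [Fintype V] [DecidableEq V] (G : SimpleGraph V)
    [DecidableRel G.Adj] (hG : G.Connected)
    (O O' : PartialOrientation G) (hO : O.Sourceless) (hO' : O'.Acyclic) :
    ¬ PartialOrientation.GenCocycleEquiv O O' := by
  classical
  intro hequiv
  have hlin : LinEquiv G O.div O'.div := linEquiv_of_genCocycleEquiv hequiv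
  obtain ⟨f, hf⟩ := hlin
  -- O.div is effective
  have heff : ∀ v, 0 ≤ O.div v := by
    intro v
    obtain ⟨u, hu⟩ := hO v
    have : 0 < O.indeg v :=
      Finset.card_pos.mpr ⟨u, by simp [hu]⟩
    unfold PartialOrientation.div
    omega
  have : Nonempty V := hG.nonempty
  obtain ⟨v0, -, hmin⟩ := Finset.exists_min_image Finset.univ f
    ⟨Classical.arbitrary V, Finset.mem_univ _⟩
  set A : Finset V := Finset.univ.filter (fun v => f v = f v0) with hA
  have hv0A : v0 ∈ A := by simp [hA]
  -- every vertex of A has an incoming O'-edge from within A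
  have key : ∀ v ∈ A, ∃ a ∈ A, O'.dir a v = true := by
    intro v hvA
    have hfv : f v = f v0 := by simpa [hA] using hvA
    set N := Finset.univ.filter (fun u => G.Adj v u) with hN
    set c := (N.filter (fun u => u ∉ A)).card with hc
    have hsum : (c : ℤ) ≤ ∑ u ∈ N, (f u - f v) := by
      rw [hc, ← Finset.sum_boole]
      refine Finset.sum_le_sum (fun u _ => ?_)
      by_cases huA : u ∈ A
      · have : f u = f v0 := by simpa [hA] using huA
        simp [huA, this, hfv]
      · have h1 : f v0 ≤ f u := hmin u (Finset.mem_univ u)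
        have h2 : f u ≠ f v0 := by
          intro h'; exact huA (by simp [hA, h'])
        simp only [huA, if_false]
        omega
    have hdv : O'.div v = O.div v + ∑ u ∈ N, (f u - f v) := by
      have h0 := hf v
      rw [← hN] at h0
      have hneg : ∑ u ∈ N, (f u - f v) = -∑ u ∈ N, (f v - f u) := by
        rw [← Finset.sum_neg_distrib]
        exact Finset.sum_congr rfl (fun u _ => by ring)
      rw [hneg]
      omega
    have hindeg : (c : ℤ) + 1 ≤ (O'.indeg v : ℤ) := by
      have h0 := heff v
      have : (c : ℤ) ≤ O'.div v := by omega
      unfold PartialOrientation.div at this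
      omega
    -- count incoming edges from outside A
    set I := Finset.univ.filter (fun a => O'.dir a v = true) with hI
    have hIcard : I.card = O'.indeg v := rfl
    have hsubset : I.filter (fun a => a ∉ A) ⊆ N.filter (fun u => u ∉ A) := by
      intro a ha
      simp only [hI, hN, Finset.mem_filter, Finset.mem_univ, true_and] at ha ⊢
      exact ⟨(O'.adj_of_dir a v ha.1).symm, ha.2⟩
    have hle : (I.filter (fun a => a ∉ A)).card ≤ c :=
      Finset.card_le_card hsubset
    have hsplitI : (I.filter (fun a => a ∈ A)).card + (I.filter (fun a => a ∉ A)).card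
        = I.card := Finset.card_filter_add_card_filter_not (fun a => a ∈ A)
    have hpos : 0 < (I.filter (fun a => a ∈ A)).card := by omega
    obtain ⟨a, ha⟩ := Finset.card_pos.mp hpos
    simp only [hI, Finset.mem_filter, Finset.mem_univ, true_and] at ha
    exact ⟨a, ha.2, ha.1⟩
  -- build an infinite descending chain inside A, forcing a directed cycle
  have hF : ∀ v : {x // x ∈ A}, ∃ a : {x // x ∈ A}, O'.dir a.1 v.1 = true := by
    rintro ⟨v, hv⟩
    obtain ⟨a, haA, hd⟩ := key v hv
    exact ⟨⟨a, haA⟩, hd⟩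
  choose F hdF using hF
  have : Nonempty {x // x ∈ A} := ⟨⟨v0, hv0A⟩⟩
  set x : ℕ → {x // x ∈ A} := fun n => F^[n] ⟨v0, hv0A⟩ with hx
  have hchain : ∀ i k, Relation.TransGen (fun a b => O'.dir a b = true)
      (x (i + k + 1)).1 (x i).1 := by
    intro i k
    induction k with
    | zero =>
        have : x (i + 1) = F (x i) := by
          simp [hx, Function.iterate_succ_apply']
        rw [show i + 0 + 1 = i + 1 by ring, this]
        exact Relation.TransGen.single (hdF (x i))
    | succ k ih =>
        have : x (i + (k + 1) + 1) = F (x (i + k + 1)) := by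
          simp only [hx]
          rw [show i + (k + 1) + 1 = (i + k + 1) + 1 by ring,
            Function.iterate_succ_apply']
        rw [this]
        exact Relation.TransGen.head (hdF (x (i + k + 1))) ih
  obtain ⟨i, j, hne, heq⟩ := Finite.exists_ne_map_eq_of_infinite x
  rcases hne.lt_or_gt with hij | hij
  · have := hchain i (j - i - 1)
    rw [show i + (j - i - 1) + 1 = j by omega, heq] at this
    exact hO' _ this
  · have := hchain j (i - j - 1)
    rw [show j + (i - j - 1) + 1 = i by omega, ← heq] at this
    exact hO' _ this
end

section
/- Let O be an acyclic partial orientation of a finite connected simple graph G. Then every divisor D linearly equivalent to D_O has some vertex v with D(v) ≤ −1; in particular, D_O is not linearly equivalent to any effective divisor, i.e., r(D_O) = −1. -/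
/-- If `O` is acyclic then every divisor linearly equivalent to `D_O`
has a vertex of value `≤ -1`; in particular `r(D_O) = -1`. -/
theorem stmt6 {V : Type*} [Fintype V] [DecidableEq V] (G : SimpleGraph V)
    [DecidableRel G.Adj] (hG : G.Connected)
    (O : PartialOrientation G) (hO : O.Acyclic) :
    (∀ D : V → ℤ, LinEquiv G O.div D → ∃ v, D v ≤ -1) ∧
      divisorRank G O.div = -1 := by
  classical
  have main : ∀ D : V → ℤ, LinEquiv G O.div D → ∃ v, D v ≤ -1 := by
    rintro D ⟨f, hf⟩
    have hne : Nonempty V := hG.nonempty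
    obtain ⟨v0, -, hmax⟩ := Finset.exists_max_image Finset.univ f
      ⟨Classical.arbitrary V, Finset.mem_univ _⟩
    haveI : IsTrans V (Relation.TransGen (fun a b => O.dir a b = true)) :=
      inferInstance
    haveI : IsIrrefl V (Relation.TransGen (fun a b => O.dir a b = true)) := ⟨hO⟩
    have hwf : WellFounded (Relation.TransGen (fun a b => O.dir a b = true)) :=
      Finite.wellFounded_of_trans_of_irrefl _
    obtain ⟨v, hvS, hmin⟩ := hwf.has_min {u | f u = f v0} ⟨v0, rfl⟩
    refine ⟨v, ?_⟩
    have hfv : f v = f v0 := hvS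
    set N : Finset V := Finset.univ.filter (fun u => G.Adj v u) with hN
    set T : Finset V := Finset.univ.filter (fun u => O.dir u v = true) with hT
    have hTN : T ⊆ N := by
      intro u hu
      simp only [hT, Finset.mem_filter, Finset.mem_univ, true_and] at hu
      simp only [hN, Finset.mem_filter, Finset.mem_univ, true_and]
      exact (O.adj_of_dir u v hu).symm
    have hT1 : ∀ u ∈ T, (1 : ℤ) ≤ f v - f u := by
      intro u hu
      simp only [hT, Finset.mem_filter, Finset.mem_univ, true_and] at hu
      have hnS : f u ≠ f v0 := fun h =>
        hmin u h (Relation.TransGen.single hu)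
      have := hmax u (Finset.mem_univ u)
      omega
    have hN0 : ∀ u ∈ N, (0 : ℤ) ≤ f v - f u := by
      intro u _
      have := hmax u (Finset.mem_univ u)
      omega
    have hcard : (T.card : ℤ) ≤ ∑ u ∈ N, (f v - f u) := by
      calc (T.card : ℤ) = ∑ _u ∈ T, (1 : ℤ) := by simp
        _ ≤ ∑ u ∈ T, (f v - f u) := Finset.sum_le_sum hT1
        _ ≤ ∑ u ∈ N, (f v - f u) :=
          Finset.sum_le_sum_of_subset_of_nonneg hTN (fun u hu _ => hN0 u hu)
    have hfv' := hf v
    have hdiv : O.div v = (T.card : ℤ) - 1 := by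
      simp [PartialOrientation.div, PartialOrientation.indeg, hT]
    rw [hdiv] at hfv'
    have : ∑ u ∈ N, (f v - f u) = ∑ u ∈ Finset.univ.filter (fun u => G.Adj v u), (f v - f u) := rfl
    omega
  refine ⟨main, ?_⟩
  unfold divisorRank
  have h0 : 0 ∈ { n : ℕ | ∃ E : V → ℤ, EffectiveDiv E ∧ degDiv E = (n : ℤ) ∧
      ¬ ∃ E' : V → ℤ, EffectiveDiv E' ∧ LinEquiv G (fun v => O.div v - E v) E' } := by
    refine ⟨fun _ => 0, fun v => le_refl 0, by simp [degDiv], ?_⟩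
    rintro ⟨E', hE', hlin⟩
    have hlin' : LinEquiv G O.div E' := by
      obtain ⟨f, hf⟩ := hlin
      exact ⟨f, fun v => by simpa using hf v⟩
    obtain ⟨v, hv⟩ := main E' hlin'
    have := hE' v
    omega
  rw [Nat.sInf_eq_zero.mpr (Or.inl h0)]
  simp
end
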